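/- arXiv:2409.05909 — 5 statements merged into one kernel-verified Lean document; each statement's English description precedes it below -/
import Mathlib

section
/- Under the stated hypotheses (ρ ∈ C²(ℝ) with σ=ρ′>0 everywhere, u a classical solution of the initial/no-flux problem), one has sup_{x∈Ω} |u(x,t) − ū₀| → 0 as t → ∞, where ū₀ = (1/L)∫₀^L u₀(x) dx. -/
open MeasureTheory Set

/-- The flux function `ρ(s) = αβs³ − 2αs² + s`. -/
noncomputable def rho (α β s : ℝ) : ℝ := α * β * s ^ 3 - 2 * α * s ^ 2 + s

/-- The diffusivity `σ(s) = ρ′(s) = 3αβs² − 4αs + 1`. -/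
noncomputable def sig (α β s : ℝ) : ℝ := 3 * α * β * s ^ 2 - 4 * α * s + 1

/-- `s₀₋ = (2α − √(4α² − 3αβ))/(3αβ)`. -/
noncomputable def s0m (α β : ℝ) : ℝ :=
  (2 * α - Real.sqrt (4 * α ^ 2 - 3 * α * β)) / (3 * α * β)

/-- `s₀₊ = (2α + √(4α² − 3αβ))/(3αβ)`. -/
noncomputable def s0p (α β : ℝ) : ℝ :=
  (2 * α + Real.sqrt (4 * α ^ 2 - 3 * α * β)) / (3 * α * β)

/-- `r* = min{ρ(s₀₋), ρ(1)}`. -/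
noncomputable def rstar (α β : ℝ) : ℝ := min (rho α β (s0m α β)) (rho α β 1)

/-- Spatial partial derivative, taken within `[0, L]`. -/
noncomputable def pdx (L : ℝ) (u : ℝ → ℝ → ℝ) (x t : ℝ) : ℝ :=
  derivWithin (fun y => u y t) (Set.Icc 0 L) x

/-- Second spatial partial derivative, taken within `[0, L]`. -/
noncomputable def pdxx (L : ℝ) (u : ℝ → ℝ → ℝ) (x t : ℝ) : ℝ :=
  derivWithin (fun y => pdx L u y t) (Set.Icc 0 L) x

/-- Time partial derivative, taken within `J ⊆ ℝ`. -/
noncomputable def pdt (J : Set ℝ) (u : ℝ → ℝ → ℝ) (x t : ℝ) : ℝ :=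
  derivWithin (fun s => u x s) J t

/-- `(f(u))_{xx}`, spatial derivatives taken within `[0, L]`. -/
noncomputable def fluxxx (L : ℝ) (f : ℝ → ℝ) (u : ℝ → ℝ → ℝ) (x t : ℝ) : ℝ :=
  derivWithin (fun y => derivWithin (fun z => f (u z t)) (Set.Icc 0 L) y) (Set.Icc 0 L) x

/-- The parabolic class `C^{2,1}([0,L] × J)`: `u, u_x, u_xx, u_t` exist and are
continuous on `[0,L] × J` (whence uniformly continuous on bounded subsets). -/
def IsC21On (L : ℝ) (J : Set ℝ) (u : ℝ → ℝ → ℝ) : Prop :=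
  (∀ t ∈ J, DifferentiableOn ℝ (fun y => u y t) (Set.Icc 0 L)) ∧
  (∀ t ∈ J, DifferentiableOn ℝ (fun y => pdx L u y t) (Set.Icc 0 L)) ∧
  (∀ x ∈ Set.Icc 0 L, DifferentiableOn ℝ (fun s => u x s) J) ∧
  ContinuousOn (fun p : ℝ × ℝ => u p.1 p.2) (Set.Icc 0 L ×ˢ J) ∧
  ContinuousOn (fun p : ℝ × ℝ => pdx L u p.1 p.2) (Set.Icc 0 L ×ˢ J) ∧
  ContinuousOn (fun p : ℝ × ℝ => pdxx L u p.1 p.2) (Set.Icc 0 L ×ˢ J) ∧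
  ContinuousOn (fun p : ℝ × ℝ => pdt J u p.1 p.2) (Set.Icc 0 L ×ˢ J)

/-- The parabolic Hölder class `C^{2+a,1+a/2}([0,L] × [t₁,t₂])`. -/
def IsHolder21 (L a t1 t2 : ℝ) (u : ℝ → ℝ → ℝ) : Prop :=
  IsC21On L (Set.Icc t1 t2) u ∧
  ∃ C : ℝ, ∀ x ∈ Set.Icc 0 L, ∀ y ∈ Set.Icc 0 L,
    ∀ s ∈ Set.Icc t1 t2, ∀ t ∈ Set.Icc t1 t2,
      |pdxx L u x t - pdxx L u y t| ≤ C * |x - y| ^ a ∧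
      |pdxx L u x s - pdxx L u x t| ≤ C * |s - t| ^ (a / 2) ∧
      |pdt (Set.Icc t1 t2) u x t - pdt (Set.Icc t1 t2) u y t| ≤ C * |x - y| ^ a ∧
      |pdt (Set.Icc t1 t2) u x s - pdt (Set.Icc t1 t2) u x t| ≤ C * |s - t| ^ (a / 2)

/-- Classical solution of `u_t = (f(u))_{xx}` in `(0,L)×(0,∞)`, `u(·,0) = u₀` on `(0,L)`,
and no-flux boundary condition `g(u)u_x = 0` at `x ∈ {0, L}` (here `g` is the diffusivity). -/
def IsClassicalSolGen (L : ℝ) (f g : ℝ → ℝ) (u₀ : ℝ → ℝ) (u : ℝ → ℝ → ℝ) : Prop :=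
  (∀ x ∈ Set.Ioo 0 L, ∀ t ∈ Set.Ioi (0:ℝ), pdt (Set.Ici 0) u x t = fluxxx L f u x t) ∧
  (∀ x ∈ Set.Ioo 0 L, u x 0 = u₀ x) ∧
  (∀ t ∈ Set.Ioi (0:ℝ), g (u 0 t) * pdx L u 0 t = 0 ∧ g (u L t) * pdx L u L t = 0)

/-- Classical solution of the population model with flux `ρ` and diffusivity `σ`. -/
def IsClassicalSol (L α β : ℝ) (u₀ : ℝ → ℝ) (u : ℝ → ℝ → ℝ) : Prop :=
  IsClassicalSolGen L (rho α β) (sig α β) u₀ u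

/-- Initial datum of class `C^{2+a}([0,L];[0,1])` with `u₀′(0) = u₀′(L) = 0`. -/
def IsC2aInit (L a : ℝ) (u₀ : ℝ → ℝ) : Prop :=
  (∀ x ∈ Set.Icc 0 L, u₀ x ∈ Set.Icc (0:ℝ) 1) ∧
  ContDiffOn ℝ 2 u₀ (Set.Icc 0 L) ∧
  (∃ C : ℝ, ∀ x ∈ Set.Icc 0 L, ∀ y ∈ Set.Icc 0 L,
    |iteratedDerivWithin 2 u₀ (Set.Icc 0 L) x - iteratedDerivWithin 2 u₀ (Set.Icc 0 L) y|
      ≤ C * |x - y| ^ a) ∧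
  derivWithin u₀ (Set.Icc 0 L) 0 = 0 ∧ derivWithin u₀ (Set.Icc 0 L) L = 0

/-- Global weak solution in `L^∞((0,L)×(0,∞);[0,1])` of
`u_t = (ρ(u))_{xx}`, `u(·,0) = u₀`, `σ(u)u_x = 0` at `x ∈ {0,L}`. -/
def IsGlobalWeakSol (L α β : ℝ) (u₀ : ℝ → ℝ) (u : ℝ → ℝ → ℝ) : Prop :=
  Measurable (fun p : ℝ × ℝ => u p.1 p.2) ∧
  (∀ x ∈ Set.Ioo 0 L, ∀ t ∈ Set.Ioi (0:ℝ), u x t ∈ Set.Icc (0:ℝ) 1) ∧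
  ∀ T > (0:ℝ), ∀ φ : ℝ → ℝ → ℝ,
    ContDiff ℝ (⊤ : ℕ∞) (fun p : ℝ × ℝ => φ p.1 p.2) →
    (∀ x ∈ Set.Icc 0 L, φ x T = 0) →
    (∀ t ∈ Set.Icc 0 T, deriv (fun y => φ y t) 0 = 0 ∧ deriv (fun y => φ y t) L = 0) →
    (∫ t in Set.Ioo (0:ℝ) T, ∫ x in Set.Ioo (0:ℝ) L,
        (u x t * deriv (fun s => φ x s) t
          + rho α β (u x t) * deriv (deriv (fun y => φ y t)) x))
      + (∫ x in Set.Ioo (0:ℝ) L, u₀ x * φ x 0) = 0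

/-- Two functions agree a.e. on `(0,L) × (0,∞)`. -/
def AEEqOn (L : ℝ) (u v : ℝ → ℝ → ℝ) : Prop :=
  ∀ᵐ p ∂(volume.restrict ((Set.Ioo (0:ℝ) L) ×ˢ (Set.Ioi (0:ℝ)))), u p.1 p.2 = v p.1 p.2


open Filter Topology intervalIntegral

section AuxStab


lemma aux_eq_zero_of_closure {X : Type*} [TopologicalSpace X] {g : X → ℝ} {s S : Set X}
    (hc : ContinuousOn g S) (hs : s ⊆ S) (h0 : ∀ p ∈ s, g p = 0) {p : X}
    (hp : p ∈ S) (hpc : p ∈ closure s) : g p = 0 := by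
  have h1 : Tendsto g (𝓝[s] p) (𝓝 (g p)) := (hc p hp).mono_left (nhdsWithin_mono _ hs)
  have h2 : Tendsto g (𝓝[s] p) (𝓝 0) := by
    apply Tendsto.congr' _ tendsto_const_nhds
    filter_upwards [self_mem_nhdsWithin] with q hq using (h0 q hq).symm
  have : (𝓝[s] p).NeBot := mem_closure_iff_nhdsWithin_neBot.mp hpc
  exact tendsto_nhds_unique h1 h2

lemma aux_not_max_of_pos {L : ℝ} (hL : 0 < L) {F w : ℝ → ℝ} {x₀ d : ℝ} (hx₀ : x₀ ∈ Icc 0 L)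
    (hF : ∀ x ∈ Icc 0 L, HasDerivWithinAt F (w x) (Icc 0 L) x)
    (hw0 : w x₀ = 0) (hw : HasDerivWithinAt w d (Icc 0 L) x₀) (hd : 0 < d)
    (hmax : ∀ x ∈ Icc 0 L, F x ≤ F x₀) : False := by
  have hslope : Tendsto (slope w x₀) (𝓝[Icc 0 L \ {x₀}] x₀) (𝓝 d) :=
    hasDerivWithinAt_iff_tendsto_slope.mp hw
  have hev : ∀ᶠ x in 𝓝[Icc 0 L \ {x₀}] x₀, 0 < slope w x₀ x :=
    hslope.eventually (eventually_gt_nhds hd)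
  rw [eventually_nhdsWithin_iff] at hev
  obtain ⟨δ, hδ, hball⟩ := Metric.eventually_nhds_iff.mp hev
  have hFc : ContinuousOn F (Icc 0 L) := fun x hx => (hF x hx).continuousWithinAt
  rcases lt_or_eq_of_le hx₀.2 with hxL | hxL
  · -- x₀ < L : w > 0 just to the right
    set b := min (x₀ + δ/2) L with hb
    have hx₀b : x₀ < b := lt_min (by linarith) hxL
    have hbL : b ≤ L := min_le_right _ _
    have hsub : Icc x₀ b ⊆ Icc 0 L := Icc_subset_Icc hx₀.1 hbL
    have hwpos : ∀ x ∈ Ioo x₀ b, 0 < w x := by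
      intro x hx
      have hxI : x ∈ Icc 0 L := hsub ⟨le_of_lt hx.1, le_of_lt hx.2⟩
      have hdist : dist x x₀ < δ := by
        rw [Real.dist_eq, abs_of_pos (by linarith [hx.1])]
        have : x < x₀ + δ/2 := lt_of_lt_of_le hx.2 (min_le_left _ _)
        linarith
      have := hball hdist ⟨hxI, by simp [ne_of_gt hx.1]⟩
      rw [slope_def_field] at this
      have hx0 : 0 < x - x₀ := by linarith [hx.1]
      have := mul_pos this hx0
      rw [div_mul_cancel₀] at this
      · linarith [hw0 ▸ this]
      · exact ne_of_gt hx0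
    have hmono : StrictMonoOn F (Icc x₀ b) := by
      apply strictMonoOn_of_deriv_pos (convex_Icc _ _) (hFc.mono hsub)
      intro x hx
      rw [interior_Icc] at hx
      have hxI : x ∈ Icc 0 L := hsub ⟨le_of_lt hx.1, le_of_lt hx.2⟩
      have hIoo : x ∈ Ioo 0 L := ⟨lt_of_le_of_lt hx₀.1 hx.1, lt_of_lt_of_le hx.2 hbL⟩
      have hda : HasDerivAt F (w x) x :=
        (hF x hxI).hasDerivAt (Icc_mem_nhds hIoo.1 hIoo.2)
      rw [hda.deriv]
      exact hwpos x hx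
    have := hmono (left_mem_Icc.mpr (le_of_lt hx₀b)) (right_mem_Icc.mpr (le_of_lt hx₀b)) hx₀b
    exact absurd (hmax b (hsub (right_mem_Icc.mpr (le_of_lt hx₀b)))) (not_le.mpr this)
  · -- x₀ = L : w < 0 just to the left
    have hx₀pos : 0 < x₀ := hxL ▸ hL
    set a := max (x₀ - δ/2) 0 with ha
    have hax₀ : a < x₀ := max_lt (by linarith) hx₀pos
    have ha0 : 0 ≤ a := le_max_right _ _
    have hsub : Icc a x₀ ⊆ Icc 0 L := Icc_subset_Icc ha0 hx₀.2
    have hwneg : ∀ x ∈ Ioo a x₀, w x < 0 := by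
      intro x hx
      have hxI : x ∈ Icc 0 L := hsub ⟨le_of_lt hx.1, le_of_lt hx.2⟩
      have hdist : dist x x₀ < δ := by
        rw [Real.dist_eq, abs_of_neg (by linarith [hx.2])]
        have : x₀ - δ/2 ≤ a := le_max_left _ _
        linarith [hx.1]
      have := hball hdist ⟨hxI, by simp [ne_of_lt hx.2]⟩
      rw [slope_def_field] at this
      have hx0 : x - x₀ < 0 := by linarith [hx.2]
      rw [hw0, sub_zero] at this
      rcases div_pos_iff.mp this with ⟨h1, h2⟩ | ⟨h1, h2⟩ <;> linarith
    have hanti : StrictAntiOn F (Icc a x₀) := by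
      apply strictAntiOn_of_deriv_neg (convex_Icc _ _) (hFc.mono hsub)
      intro x hx
      rw [interior_Icc] at hx
      have hxI : x ∈ Icc 0 L := hsub ⟨le_of_lt hx.1, le_of_lt hx.2⟩
      have hIoo : x ∈ Ioo 0 L := ⟨lt_of_le_of_lt ha0 hx.1, lt_of_lt_of_le hx.2 hx₀.2⟩
      have hda : HasDerivAt F (w x) x :=
        (hF x hxI).hasDerivAt (Icc_mem_nhds hIoo.1 hIoo.2)
      rw [hda.deriv]
      exact hwneg x hx
    have := hanti (left_mem_Icc.mpr (le_of_lt hax₀)) (right_mem_Icc.mpr (le_of_lt hax₀)) hax₀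
    exact absurd (hmax a (hsub (left_mem_Icc.mpr (le_of_lt hax₀)))) (not_le.mpr this)

lemma aux_deriv_nonneg_right {g : ℝ → ℝ} {t₁ t₀ d : ℝ} (h : t₁ < t₀)
    (hg : HasDerivAt g d t₀) (hmax : ∀ s ∈ Icc t₁ t₀, g s ≤ g t₀) : 0 ≤ d := by
  have hslope : Tendsto (slope g t₀) (𝓝[≠] t₀) (𝓝 d) :=
    hasDerivAt_iff_tendsto_slope.mp hg
  have h2 : Tendsto (slope g t₀) (𝓝[<] t₀) (𝓝 d) :=
    hslope.mono_left (nhdsWithin_mono _ (fun x hx => ne_of_lt hx))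
  refine ge_of_tendsto h2 ?_
  filter_upwards [Ioo_mem_nhdsLT_of_mem (right_mem_Ioc.mpr h)] with s hs
  rw [slope_def_field]
  rw [div_nonneg_iff]; right; constructor
  · have := hmax s ⟨le_of_lt hs.1, le_of_lt hs.2⟩
    linarith
  · linarith [hs.2]

lemma aux_max_principle (L t₁ t₂ : ℝ) (hL : 0 < L) (ht : t₁ ≤ t₂)
    (u F W E P : ℝ → ℝ → ℝ)
    (hu : ContinuousOn (fun p : ℝ × ℝ => u p.1 p.2) (Icc 0 L ×ˢ Icc t₁ t₂))
    (hmono : ∀ t, ∀ x y, u x t ≤ u y t → F x t ≤ F y t)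
    (hF : ∀ t ∈ Icc t₁ t₂, ∀ x ∈ Icc 0 L, HasDerivWithinAt (fun y => F y t) (W x t) (Icc 0 L) x)
    (hW : ∀ t ∈ Icc t₁ t₂, ∀ x ∈ Icc 0 L, HasDerivWithinAt (fun y => W y t) (E x t) (Icc 0 L) x)
    (hT : ∀ x ∈ Icc 0 L, ∀ t ∈ Ioc t₁ t₂, HasDerivAt (fun s => u x s) (P x t) t)
    (hPE : ∀ x ∈ Icc 0 L, ∀ t ∈ Ioc t₁ t₂, P x t ≤ E x t)
    (hBC : ∀ t ∈ Ioc t₁ t₂, W 0 t = 0 ∧ W L t = 0)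
    (hint : ∀ t ∈ Ioc t₁ t₂, ∀ x₀ ∈ Ioo 0 L, (∀ y ∈ Icc 0 L, u y t ≤ u x₀ t) → W x₀ t = 0)
    {y₀ : ℝ} (hy₀ : y₀ ∈ Icc 0 L) (hmax : ∀ y ∈ Icc 0 L, u y t₁ ≤ u y₀ t₁) :
    ∀ x ∈ Icc 0 L, u x t₂ ≤ u y₀ t₁ := by
  intro x hx
  rcases eq_or_lt_of_le ht with rfl | ht'
  · exact hmax x hx
  -- main: ε-perturbation
  have key : ∀ ε > (0:ℝ), u x t₂ - ε * (t₂ - t₁) ≤ u y₀ t₁ := by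
    intro ε hε
    set K : Set (ℝ × ℝ) := Icc 0 L ×ˢ Icc t₁ t₂ with hK
    have hKc : IsCompact K := isCompact_Icc.prod isCompact_Icc
    have hKne : K.Nonempty := ⟨(0, t₁), by constructor <;> simp [le_of_lt hL, ht]⟩
    set φ : ℝ × ℝ → ℝ := fun p => u p.1 p.2 - ε * (p.2 - t₁) with hφ
    have hφc : ContinuousOn φ K := by
      apply hu.sub
      exact (continuous_const.mul (continuous_snd.sub continuous_const)).continuousOn
    obtain ⟨p₀, hp₀K, hp₀max⟩ := hKc.exists_isMaxOn hKne hφc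
    obtain ⟨x₀, t₀⟩ := p₀
    obtain ⟨hx₀ : x₀ ∈ Icc 0 L, ht₀ : t₀ ∈ Icc t₁ t₂⟩ := hp₀K
    have hp₀ : ∀ q ∈ K, φ q ≤ φ (x₀, t₀) := fun q hq => hp₀max hq
    have ht₀1 : t₀ = t₁ := by
      by_contra hne
      have ht₀' : t₀ ∈ Ioc t₁ t₂ := ⟨lt_of_le_of_ne ht₀.1 (Ne.symm hne), ht₀.2⟩
      -- spatial max at t₀
      have uxmax : ∀ y ∈ Icc 0 L, u y t₀ ≤ u x₀ t₀ := by
        intro y hy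
        have := hp₀ (y, t₀) ⟨hy, ht₀⟩
        simpa [hφ] using this
      have Fmax : ∀ y ∈ Icc 0 L, F y t₀ ≤ F x₀ t₀ := fun y hy => hmono _ _ _ (uxmax y hy)
      have ht₀Icc : t₀ ∈ Icc t₁ t₂ := ht₀
      have W0 : W x₀ t₀ = 0 := by
        rcases eq_or_lt_of_le hx₀.1 with h0 | h0
        · rw [← h0]; exact (hBC t₀ ht₀').1
        rcases eq_or_lt_of_le hx₀.2 with hL' | hL'
        · rw [hL']; exact (hBC t₀ ht₀').2
        · exact hint t₀ ht₀' x₀ ⟨h0, hL'⟩ uxmax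
      have Enonpos : E x₀ t₀ ≤ 0 := by
        by_contra hpos
        exact aux_not_max_of_pos hL hx₀ (hF t₀ ht₀Icc) W0 (hW t₀ ht₀Icc x₀ hx₀)
          (not_le.mp hpos) Fmax
      -- time derivative
      have hgd : HasDerivAt (fun s => u x₀ s - ε * (s - t₁)) (P x₀ t₀ - ε) t₀ := by
        have h1 : HasDerivAt (fun s : ℝ => ε * (s - t₁)) ε t₀ := by
          simpa using ((hasDerivAt_id t₀).sub_const t₁).const_mul ε
        exact (hT x₀ hx₀ t₀ ht₀').sub h1
      have hgmax : ∀ s ∈ Icc t₁ t₀, u x₀ s - ε * (s - t₁) ≤ u x₀ t₀ - ε * (t₀ - t₁) := by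
        intro s hs
        exact hp₀ (x₀, s) ⟨hx₀, ⟨hs.1, le_trans hs.2 ht₀.2⟩⟩
      have := aux_deriv_nonneg_right ht₀'.1 hgd hgmax
      have := hPE x₀ hx₀ t₀ ht₀'
      linarith
    -- conclude
    have h1 := hp₀ (x, t₂) ⟨hx, ⟨ht, le_refl _⟩⟩
    have h2 : φ (x₀, t₀) = u x₀ t₁ := by
      rw [hφ]; simp [ht₀1]
    have h3 : u x₀ t₁ ≤ u y₀ t₁ := hmax x₀ hx₀
    simp only [hφ, ht₀1] at h1
    have hz : ε * (t₁ - t₁) = 0 := by ring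
    rw [hz, sub_zero] at h1
    linarith [h3]
  by_contra hcon
  push_neg at hcon
  have hd : 0 < t₂ - t₁ := by linarith
  set ε := (u x t₂ - u y₀ t₁) / (2 * (t₂ - t₁)) with hεdef
  have hεpos : 0 < ε := by apply div_pos <;> linarith
  have hval : ε * (t₂ - t₁) = (u x t₂ - u y₀ t₁) / 2 := by
    rw [hεdef]; field_simp
  have := key ε hεpos
  rw [hval] at this
  linarith

/-- `W = σ(u) u_x`, the flux gradient. -/
noncomputable def Wfn (L : ℝ) (f : ℝ → ℝ) (u : ℝ → ℝ → ℝ) (x t : ℝ) : ℝ :=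
  deriv f (u x t) * pdx L u x t

/-- `E = (f(u))_{xx}` expanded. -/
noncomputable def Efn (L : ℝ) (f : ℝ → ℝ) (u : ℝ → ℝ → ℝ) (x t : ℝ) : ℝ :=
  deriv (deriv f) (u x t) * pdx L u x t * pdx L u x t + deriv f (u x t) * pdxx L u x t

section Facts
variable {L : ℝ} {f : ℝ → ℝ} {u : ℝ → ℝ → ℝ}

lemma f_deriv_contDiff (hf : ContDiff ℝ 2 f) : ContDiff ℝ 1 (deriv f) := by
  have : ContDiff ℝ (1 + 1) f := by norm_num; exact hf
  exact (contDiff_succ_iff_deriv.mp this).2.2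

lemma f_deriv2_cont (hf : ContDiff ℝ 2 f) : Continuous (deriv (deriv f)) := by
  have h1 : ContDiff ℝ (0 + 1) (deriv f) := by norm_num; exact f_deriv_contDiff hf
  exact ((contDiff_succ_iff_deriv.mp h1).2.2).continuous

lemma fact_hW (hL : 0 < L) (hf : ContDiff ℝ 2 f) (hu : IsC21On L (Set.Ici 0) u) :
    ∀ t ∈ Ici (0:ℝ), ∀ x ∈ Icc 0 L,
      HasDerivWithinAt (fun y => f (u y t)) (Wfn L f u x t) (Icc 0 L) x := by
  intro t ht x hx
  have hdu : HasDerivWithinAt (fun y => u y t) (pdx L u x t) (Icc 0 L) x :=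
    (hu.1 t ht x hx).hasDerivWithinAt
  have hdf : HasDerivAt f (deriv f (u x t)) (u x t) :=
    (hf.differentiable (by norm_num) (u x t)).hasDerivAt
  exact hdf.comp_hasDerivWithinAt x hdu

lemma fact_hE (hL : 0 < L) (hf : ContDiff ℝ 2 f) (hu : IsC21On L (Set.Ici 0) u) :
    ∀ t ∈ Ici (0:ℝ), ∀ x ∈ Icc 0 L,
      HasDerivWithinAt (fun y => Wfn L f u y t) (Efn L f u x t) (Icc 0 L) x := by
  intro t ht x hx
  have hdu : HasDerivWithinAt (fun y => u y t) (pdx L u x t) (Icc 0 L) x :=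
    (hu.1 t ht x hx).hasDerivWithinAt
  have hdf' : HasDerivAt (deriv f) (deriv (deriv f) (u x t)) (u x t) :=
    ((f_deriv_contDiff hf).differentiable (by norm_num) (u x t)).hasDerivAt
  have h1 : HasDerivWithinAt (fun y => deriv f (u y t))
      (deriv (deriv f) (u x t) * pdx L u x t) (Icc 0 L) x :=
    by exact hdf'.comp_hasDerivWithinAt x hdu
  have h2 : HasDerivWithinAt (fun y => pdx L u y t) (pdxx L u x t) (Icc 0 L) x :=
    (hu.2.1 t ht x hx).hasDerivWithinAt
  exact h1.mul h2

lemma fact_flux (hL : 0 < L) (hf : ContDiff ℝ 2 f) (hu : IsC21On L (Set.Ici 0) u) :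
    ∀ t ∈ Ici (0:ℝ), ∀ x ∈ Icc 0 L, fluxxx L f u x t = Efn L f u x t := by
  intro t ht x hx
  have hud : UniqueDiffOn ℝ (Icc (0:ℝ) L) := uniqueDiffOn_Icc hL
  have heq : EqOn (fun y => derivWithin (fun z => f (u z t)) (Icc 0 L) y)
      (fun y => Wfn L f u y t) (Icc 0 L) := fun y hy =>
    (fact_hW hL hf hu t ht y hy).derivWithin (hud y hy)
  unfold fluxxx
  rw [derivWithin_congr heq (heq hx)]
  exact (fact_hE hL hf hu t ht x hx).derivWithin (hud x hx)

lemma fact_Wcont (hL : 0 < L) (hf : ContDiff ℝ 2 f) (hu : IsC21On L (Set.Ici 0) u) :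
    ContinuousOn (fun p : ℝ × ℝ => Wfn L f u p.1 p.2) (Icc 0 L ×ˢ Ici 0) := by
  have h1 : Continuous (deriv f) := (f_deriv_contDiff hf).continuous
  exact (h1.comp_continuousOn hu.2.2.2.1).mul hu.2.2.2.2.1

lemma fact_Econt (hL : 0 < L) (hf : ContDiff ℝ 2 f) (hu : IsC21On L (Set.Ici 0) u) :
    ContinuousOn (fun p : ℝ × ℝ => Efn L f u p.1 p.2) (Icc 0 L ×ˢ Ici 0) := by
  have h1 : Continuous (deriv f) := (f_deriv_contDiff hf).continuous
  have h2 := f_deriv2_cont hf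
  exact (((h2.comp_continuousOn hu.2.2.2.1).mul hu.2.2.2.2.1).mul hu.2.2.2.2.1).add
    ((h1.comp_continuousOn hu.2.2.2.1).mul hu.2.2.2.2.2.1)

lemma fact_time (hL : 0 < L) (hu : IsC21On L (Set.Ici 0) u) :
    ∀ x ∈ Icc (0:ℝ) L, ∀ t > (0:ℝ), HasDerivAt (fun s => u x s) (pdt (Set.Ici 0) u x t) t := by
  intro x hx t ht
  have hmem : Ici (0:ℝ) ∈ 𝓝 t := Ici_mem_nhds ht
  have h1 : DifferentiableAt ℝ (fun s => u x s) t :=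
    (hu.2.2.1 x hx t (le_of_lt ht)).differentiableAt hmem
  have h2 : pdt (Set.Ici 0) u x t = deriv (fun s => u x s) t := derivWithin_of_mem_nhds hmem
  rw [h2]
  exact h1.hasDerivAt

lemma fact_PDE (hL : 0 < L) (hf : ContDiff ℝ 2 f) (hu : IsC21On L (Set.Ici 0) u)
    {u₀ : ℝ → ℝ} (husol : IsClassicalSolGen L f (deriv f) u₀ u) :
    ∀ x ∈ Icc (0:ℝ) L, ∀ t ∈ Ici (0:ℝ), pdt (Set.Ici 0) u x t = Efn L f u x t := by
  intro x hx t ht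
  have key := aux_eq_zero_of_closure
    (g := fun p : ℝ × ℝ => pdt (Set.Ici 0) u p.1 p.2 - Efn L f u p.1 p.2)
    (S := Icc 0 L ×ˢ Ici 0) (s := Ioo 0 L ×ˢ Ioi 0)
    (hu.2.2.2.2.2.2.sub (fact_Econt hL hf hu))
    (prod_mono Ioo_subset_Icc_self Ioi_subset_Ici_self)
    (by rintro ⟨y, s⟩ ⟨hy, hs⟩
        have h1 := husol.1 y hy s hs
        have h2 := fact_flux hL hf hu s (Ioi_subset_Ici_self hs) y (Ioo_subset_Icc_self hy)
        simp only
        rw [h1, h2, sub_self])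
    (⟨hx, ht⟩ : (x,t) ∈ Icc 0 L ×ˢ Ici 0)
    (by rw [closure_prod_eq, closure_Ioo (ne_of_lt hL), closure_Ioi]; exact ⟨hx, ht⟩)
  simpa [sub_eq_zero] using key

lemma fact_BC (hL : 0 < L) (hf : ContDiff ℝ 2 f) (hu : IsC21On L (Set.Ici 0) u)
    {u₀ : ℝ → ℝ} (husol : IsClassicalSolGen L f (deriv f) u₀ u) :
    ∀ t ∈ Ici (0:ℝ), Wfn L f u 0 t = 0 ∧ Wfn L f u L t = 0 := by
  intro t ht
  have hWc := fact_Wcont hL hf hu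
  constructor
  · apply aux_eq_zero_of_closure (g := fun s => Wfn L f u 0 s) (S := Ici 0) (s := Ioi 0)
      _ Ioi_subset_Ici_self (fun s hs => (husol.2.2 s hs).1) ht
      (by rw [closure_Ioi]; exact ht)
    have hmap : MapsTo (fun s : ℝ => ((0:ℝ), s)) (Ici 0) (Icc 0 L ×ˢ Ici 0) :=
      fun s hs => ⟨⟨le_refl _, le_of_lt hL⟩, hs⟩
    exact hWc.comp (Continuous.continuousOn (by continuity)) hmap
  · apply aux_eq_zero_of_closure (g := fun s => Wfn L f u L s) (S := Ici 0) (s := Ioi 0)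
      _ Ioi_subset_Ici_self (fun s hs => (husol.2.2 s hs).2) ht
      (by rw [closure_Ioi]; exact ht)
    have hmap : MapsTo (fun s : ℝ => ((L:ℝ), s)) (Ici 0) (Icc 0 L ×ˢ Ici 0) :=
      fun s hs => ⟨⟨le_of_lt hL, le_refl _⟩, hs⟩
    exact hWc.comp (Continuous.continuousOn (by continuity)) hmap

end Facts


lemma aux_tendsto_integral (L : ℝ) (hL : 0 < L) (u : ℝ → ℝ → ℝ)
    (hc : ContinuousOn (fun p : ℝ × ℝ => u p.1 p.2) (Icc 0 L ×ˢ Icc 0 1)) :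
    Tendsto (fun t => ∫ x in (0:ℝ)..L, u x t) (𝓝[>] (0:ℝ))
      (𝓝 (∫ x in (0:ℝ)..L, u x 0)) := by
  rw [Metric.tendsto_nhdsWithin_nhds]
  intro ε hε
  have hK : IsCompact (Icc (0:ℝ) L ×ˢ Icc (0:ℝ) 1) := isCompact_Icc.prod isCompact_Icc
  have hUC := hK.uniformContinuousOn_of_continuous hc
  rw [Metric.uniformContinuousOn_iff] at hUC
  obtain ⟨δ, hδ, hUC⟩ := hUC (ε / (2 * L)) (by positivity)
  refine ⟨min δ 1, by positivity, ?_⟩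
  intro t ht hdist
  rw [Real.dist_eq, sub_zero, abs_of_pos ht] at hdist
  have ht1 : t ∈ Icc (0:ℝ) 1 := ⟨le_of_lt ht, le_of_lt (lt_of_lt_of_le hdist (min_le_right _ _))⟩
  have htδ : t < δ := lt_of_lt_of_le hdist (min_le_left _ _)
  have hslice : ∀ s ∈ Icc (0:ℝ) 1, IntervalIntegrable (fun x => u x s) volume 0 L := by
    intro s hs
    apply ContinuousOn.intervalIntegrable
    rw [uIcc_of_le (le_of_lt hL)]
    exact hc.comp (g := fun p : ℝ × ℝ => u p.1 p.2)
      ((continuous_id.prodMk continuous_const).continuousOn (s := Icc 0 L))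
      (fun x hx => ⟨hx, hs⟩)
  have h0 : (0:ℝ) ∈ Icc (0:ℝ) 1 := ⟨le_refl _, zero_le_one⟩
  rw [Real.dist_eq, ← intervalIntegral.integral_sub (hslice t ht1) (hslice 0 h0)]
  have hbd : ∀ x ∈ Set.uIoc (0:ℝ) L, ‖u x t - u x 0‖ ≤ ε / (2 * L) := by
    intro x hx
    rw [uIoc_of_le (le_of_lt hL)] at hx
    have hxI : x ∈ Icc (0:ℝ) L := ⟨le_of_lt hx.1, hx.2⟩
    have hd : dist ((x, t) : ℝ × ℝ) (x, 0) < δ := by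
      rw [Prod.dist_eq, Real.dist_eq, Real.dist_eq]
      simp only [sub_self, abs_zero, sub_zero]
      rw [max_eq_right (abs_nonneg _), abs_of_pos ht]
      exact htδ
    have := hUC (x, t) ⟨hxI, ht1⟩ (x, 0) ⟨hxI, h0⟩ hd
    rw [Real.dist_eq] at this
    exact le_of_lt this
  calc |∫ x in (0:ℝ)..L, (u x t - u x 0)| ≤ ε / (2 * L) * |L - 0| :=
        intervalIntegral.norm_integral_le_of_norm_le_const hbd
    _ = ε / 2 := by rw [sub_zero, abs_of_pos hL]; field_simp
    _ < ε := by linarith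

lemma aux_hasDerivAt_integral (L : ℝ) (hL : 0 < L) (F F' : ℝ → ℝ → ℝ) {t : ℝ} (ht : 0 < t)
    (hcont : ContinuousOn (fun p : ℝ × ℝ => F p.1 p.2) (Icc 0 L ×ˢ Ici 0))
    (hcont' : ContinuousOn (fun p : ℝ × ℝ => F' p.1 p.2) (Icc 0 L ×ˢ Ici 0))
    (hderiv : ∀ x ∈ Icc (0:ℝ) L, ∀ s > (0:ℝ), HasDerivAt (fun s' => F x s') (F' x s) s) :
    HasDerivAt (fun s => ∫ x in (0:ℝ)..L, F x s) (∫ x in (0:ℝ)..L, F' x t) t := by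
  have hK : IsCompact (Icc (0:ℝ) L ×ˢ Icc (t/2) (2*t)) := isCompact_Icc.prod isCompact_Icc
  have hKsub : Icc (0:ℝ) L ×ˢ Icc (t/2) (2*t) ⊆ Icc 0 L ×ˢ Ici 0 := by
    apply Set.prod_mono_right
    intro s hs
    have : (0:ℝ) < t/2 := by linarith
    exact le_of_lt (lt_of_lt_of_le this hs.1)
  obtain ⟨C, hC⟩ := hK.exists_bound_of_continuousOn (hcont'.mono hKsub)
  have hball : ∀ s ∈ Metric.ball t (t/2), s ∈ Icc (t/2) (2*t) := by
    intro s hs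
    rw [Metric.mem_ball, Real.dist_eq] at hs
    cases abs_lt.mp hs with
    | intro h1 h2 => constructor <;> linarith
  have hslicemeas : ∀ s ≥ (0:ℝ), AEStronglyMeasurable (fun x => F x s)
      (volume.restrict (Set.uIoc (0:ℝ) L)) := by
    intro s hs
    rw [uIoc_of_le (le_of_lt hL)]
    apply ContinuousOn.aestronglyMeasurable _ measurableSet_Ioc
    exact hcont.comp (g := fun p : ℝ × ℝ => F p.1 p.2)
      ((continuous_id.prodMk continuous_const).continuousOn (s := Ioc 0 L))
      (fun x hx => ⟨Ioc_subset_Icc_self hx, hs⟩)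
  have hslicemeas' : AEStronglyMeasurable (fun x => F' x t) (volume.restrict (Set.uIoc (0:ℝ) L)) := by
    rw [uIoc_of_le (le_of_lt hL)]
    apply ContinuousOn.aestronglyMeasurable _ measurableSet_Ioc
    exact hcont'.comp (g := fun p : ℝ × ℝ => F' p.1 p.2)
      ((continuous_id.prodMk continuous_const).continuousOn (s := Ioc 0 L))
      (fun x hx => ⟨Ioc_subset_Icc_self hx, le_of_lt ht⟩)
  have key := intervalIntegral.hasDerivAt_integral_of_dominated_loc_of_deriv_le
    (𝕜 := ℝ) (μ := volume) (F := fun s x => F x s) (F' := fun s x => F' x s)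
    (x₀ := t) (a := 0) (b := L) (bound := fun _ => C) (s := Metric.ball t (t/2))
    (Metric.ball_mem_nhds t (by linarith))
    (by filter_upwards [eventually_gt_nhds ht] with s hs using hslicemeas s (le_of_lt hs))
    (by apply ContinuousOn.intervalIntegrable
        rw [uIcc_of_le (le_of_lt hL)]
        exact hcont.comp (g := fun p : ℝ × ℝ => F p.1 p.2)
          ((continuous_id.prodMk continuous_const).continuousOn (s := Icc 0 L))
          (fun x hx => ⟨hx, le_of_lt ht⟩))
    hslicemeas'
    (by apply Eventually.of_forall
        intro x hx s hs
        have hxI : x ∈ Icc (0:ℝ) L := by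
          rw [uIoc_of_le (le_of_lt hL)] at hx; exact Ioc_subset_Icc_self hx
        exact hC (x, s) ⟨hxI, hball s hs⟩)
    intervalIntegrable_const
    (by apply Eventually.of_forall
        intro x hx s hs
        have hxI : x ∈ Icc (0:ℝ) L := by
          rw [uIoc_of_le (le_of_lt hL)] at hx; exact Ioc_subset_Icc_self hx
        have hs0 : 0 < s := by
          have := (hball s hs).1; linarith
        exact hderiv x hxI s hs0)
  exact key.2


lemma aux_ftc {L : ℝ} (hL : 0 < L) {a b : ℝ} (hab : a ≤ b) (ha : 0 ≤ a) (hb : b ≤ L)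
    {G g : ℝ → ℝ}
    (hG : ∀ x ∈ Icc 0 L, HasDerivWithinAt G (g x) (Icc 0 L) x)
    (hgc : ContinuousOn g (Icc 0 L)) :
    ∫ x in a..b, g x = G b - G a := by
  have hsub : Icc a b ⊆ Icc 0 L := Icc_subset_Icc ha hb
  apply intervalIntegral.integral_eq_sub_of_hasDeriv_right_of_le hab
  · exact fun x hx => ((hG x (hsub hx)).continuousWithinAt).mono hsub
  · intro x hx
    have hxI : x ∈ Ioo 0 L := ⟨lt_of_le_of_lt ha hx.1, lt_of_lt_of_le hx.2 hb⟩
    exact ((hG x (Ioo_subset_Icc_self hxI)).hasDerivAt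
      (Icc_mem_nhds hxI.1 hxI.2)).hasDerivWithinAt
  · apply ContinuousOn.intervalIntegrable
    rw [uIcc_of_le hab]
    exact hgc.mono hsub

end AuxStab

set_option maxHeartbeats 1600000 in
/-- Lemma 2.1(iii): uniform stabilization to the initial average. -/
theorem lemma_classical_stabilization
    (L : ℝ) (hL : 0 < L)
    (f : ℝ → ℝ) (hf : ContDiff ℝ 2 f) (hσ : ∀ s : ℝ, 0 < deriv f s)
    (u₀ : ℝ → ℝ) (hu₀reg : ContDiffOn ℝ 2 u₀ (Set.Icc 0 L))
    (hcompat : deriv f (u₀ 0) * derivWithin u₀ (Set.Icc 0 L) 0 = 0 ∧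
               deriv f (u₀ L) * derivWithin u₀ (Set.Icc 0 L) L = 0)
    (u : ℝ → ℝ → ℝ) (hu : IsC21On L (Set.Ici 0) u)
    (husol : IsClassicalSolGen L f (deriv f) u₀ u)
    (ubar : ℝ) (hubar : ubar = (∫ x in Set.Ioo (0:ℝ) L, u₀ x) / L) :
    ∀ ε > (0:ℝ), ∃ T : ℝ, ∀ t ≥ T, ∀ x ∈ Set.Ioo (0:ℝ) L, |u x t - ubar| < ε := by
  intro ε hε
  have hW := fact_hW hL hf hu
  have hEd := fact_hE hL hf hu
  have hWcont := fact_Wcont hL hf hu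
  have hEcont := fact_Econt hL hf hu
  have htime := fact_time hL hu
  have hPDE := fact_PDE hL hf hu husol
  have hBCW := fact_BC hL hf hu husol
  have hucont := hu.2.2.2.1
  have hpdxcont := hu.2.2.2.2.1
  have hfmono : StrictMono f := strictMono_of_deriv_pos hσ
  set c := ubar with hcdef
  -- continuity of slices
  have hslice : ∀ t ≥ (0:ℝ), ContinuousOn (fun y => u y t) (Set.Icc 0 L) := by
    intro t ht
    exact hucont.comp (g := fun p : ℝ × ℝ => u p.1 p.2)
      ((continuous_id.prodMk continuous_const).continuousOn (s := Set.Icc 0 L))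
      (fun x hx => ⟨hx, ht⟩)
  have hpdxslice : ∀ t ≥ (0:ℝ), ContinuousOn (fun y => pdx L u y t) (Set.Icc 0 L) := by
    intro t ht
    exact hpdxcont.comp (g := fun p : ℝ × ℝ => pdx L u p.1 p.2)
      ((continuous_id.prodMk continuous_const).continuousOn (s := Set.Icc 0 L))
      (fun x hx => ⟨hx, ht⟩)
  have hWslice : ∀ t ≥ (0:ℝ), ContinuousOn (fun y => Wfn L f u y t) (Set.Icc 0 L) := by
    intro t ht
    exact hWcont.comp (g := fun p : ℝ × ℝ => Wfn L f u p.1 p.2)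
      ((continuous_id.prodMk continuous_const).continuousOn (s := Set.Icc 0 L))
      (fun x hx => ⟨hx, ht⟩)
  have hEslice : ∀ t ≥ (0:ℝ), ContinuousOn (fun y => Efn L f u y t) (Set.Icc 0 L) := by
    intro t ht
    exact hEcont.comp (g := fun p : ℝ × ℝ => Efn L f u p.1 p.2)
      ((continuous_id.prodMk continuous_const).continuousOn (s := Set.Icc 0 L))
      (fun x hx => ⟨hx, ht⟩)
  -- vanishing of W at interior extrema
  have hpdx0 : ∀ t > (0:ℝ), ∀ x₀ ∈ Set.Ioo (0:ℝ) L,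
      (IsLocalMax (fun y => u y t) x₀ ∨ IsLocalMin (fun y => u y t) x₀) →
      Wfn L f u x₀ t = 0 := by
    intro t ht x₀ hx₀ hloc
    have hmem : Set.Icc (0:ℝ) L ∈ 𝓝 x₀ := Icc_mem_nhds hx₀.1 hx₀.2
    have hder : pdx L u x₀ t = deriv (fun y => u y t) x₀ := derivWithin_of_mem_nhds hmem
    have hzero : deriv (fun y => u y t) x₀ = 0 := by
      cases hloc with
      | inl h => exact h.deriv_eq_zero
      | inr h => exact h.deriv_eq_zero
    unfold Wfn
    rw [hder, hzero, mul_zero]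
  -- maximum principle
  have maxp : ∀ t₁ t₂ y₀ : ℝ, 0 ≤ t₁ → t₁ ≤ t₂ → y₀ ∈ Set.Icc 0 L →
      (∀ y ∈ Set.Icc 0 L, u y t₁ ≤ u y₀ t₁) → ∀ x ∈ Set.Icc 0 L, u x t₂ ≤ u y₀ t₁ := by
    intro t₁ t₂ y₀ ht₁ ht hy₀ hmax
    have hIsub : Set.Icc t₁ t₂ ⊆ Set.Ici (0:ℝ) := fun s hs => le_trans ht₁ hs.1
    exact aux_max_principle L t₁ t₂ hL ht u (fun x t => f (u x t)) (Wfn L f u) (Efn L f u)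
      (pdt (Set.Ici 0) u)
      (hucont.mono (Set.prod_mono_right hIsub))
      (fun t x y h => (hfmono.monotone h))
      (fun t htm x hx => hW t (hIsub htm) x hx)
      (fun t htm x hx => hEd t (hIsub htm) x hx)
      (fun x hx t htm => htime x hx t (lt_of_le_of_lt ht₁ htm.1))
      (fun x hx t htm => le_of_eq (hPDE x hx t (le_trans ht₁ (le_of_lt htm.1))))
      (fun t htm => hBCW t (le_trans ht₁ (le_of_lt htm.1)))
      (by intro t htm x₀ hx₀ hmx
          apply hpdx0 t (lt_of_le_of_lt ht₁ htm.1) x₀ hx₀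
          left
          exact IsMaxOn.isLocalMax (isMaxOn_iff.mpr hmx) (Icc_mem_nhds hx₀.1 hx₀.2))
      hy₀ hmax
  -- minimum principle (apply max principle to -u)
  have minp : ∀ t₁ t₂ y₀ : ℝ, 0 ≤ t₁ → t₁ ≤ t₂ → y₀ ∈ Set.Icc 0 L →
      (∀ y ∈ Set.Icc 0 L, u y₀ t₁ ≤ u y t₁) → ∀ x ∈ Set.Icc 0 L, u y₀ t₁ ≤ u x t₂ := by
    intro t₁ t₂ y₀ ht₁ ht hy₀ hmin x hx
    have hIsub : Set.Icc t₁ t₂ ⊆ Set.Ici (0:ℝ) := fun s hs => le_trans ht₁ hs.1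
    have key := aux_max_principle L t₁ t₂ hL ht (fun x t => -u x t)
      (fun x t => -(f (u x t)))
      (fun x t => -(Wfn L f u x t)) (fun x t => -(Efn L f u x t))
      (fun x t => -(pdt (Set.Ici 0) u x t))
      ((hucont.mono (Set.prod_mono_right hIsub)).neg)
      (fun t x y h => neg_le_neg (hfmono.monotone (neg_le_neg_iff.mp h)))
      (fun t htm x' hx' => (hW t (hIsub htm) x' hx').neg)
      (fun t htm x' hx' => (hEd t (hIsub htm) x' hx').neg)
      (fun x' hx' t htm => (htime x' hx' t (lt_of_le_of_lt ht₁ htm.1)).neg)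
      (fun x' hx' t htm =>
        le_of_eq (by show -pdt (Set.Ici 0) u x' t = -Efn L f u x' t
                     rw [hPDE x' hx' t (le_trans ht₁ (le_of_lt htm.1))]))
      (fun t htm => ⟨by show -Wfn L f u 0 t = 0
                        rw [(hBCW t (le_trans ht₁ (le_of_lt htm.1))).1, neg_zero],
                     by show -Wfn L f u L t = 0
                        rw [(hBCW t (le_trans ht₁ (le_of_lt htm.1))).2, neg_zero]⟩)
      (by intro t htm x₀ hx₀ hmx
          show -Wfn L f u x₀ t = 0
          rw [neg_eq_zero]
          apply hpdx0 t (lt_of_le_of_lt ht₁ htm.1) x₀ hx₀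
          right
          apply IsMinOn.isLocalMin _ (Icc_mem_nhds hx₀.1 hx₀.2)
          apply isMinOn_iff.mpr
          intro y hy
          have h5 := hmx y hy
          linarith)
      hy₀ (fun y hy => neg_le_neg (hmin y hy)) x hx
    linarith [key]
  -- global L^∞ bounds
  have hIccK : IsCompact (Set.Icc (0:ℝ) L) := isCompact_Icc
  have hIccNe : (Set.Icc (0:ℝ) L).Nonempty := Set.nonempty_Icc.mpr (le_of_lt hL)
  obtain ⟨yP, hyP, hyPmax⟩ := hIccK.exists_isMaxOn hIccNe (hslice 0 (le_refl _))
  obtain ⟨yM, hyM, hyMmin⟩ := hIccK.exists_isMinOn hIccNe (hslice 0 (le_refl _))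
  set M₀ := u yP 0 with hM₀
  set m₀ := u yM 0 with hm₀
  have hbound : ∀ t ≥ (0:ℝ), ∀ x ∈ Set.Icc 0 L, u x t ∈ Set.Icc m₀ M₀ := by
    intro t ht x hx
    constructor
    · exact minp 0 t yM (le_refl _) ht hyM (fun y hy => hyMmin hy) x hx
    · exact maxp 0 t yP (le_refl _) ht hyP (fun y hy => hyPmax hy) x hx
  have hm₀M₀ : m₀ ≤ M₀ := hyMmin hyP
  obtain ⟨s₀, hs₀, hs₀min⟩ := (isCompact_Icc (a := m₀) (b := M₀)).exists_isMinOn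
    (Set.nonempty_Icc.mpr hm₀M₀) ((f_deriv_contDiff hf).continuous.continuousOn)
  set σmin := deriv f s₀ with hσmindef
  have hσminpos : 0 < σmin := hσ s₀
  have hσlow : ∀ t ≥ (0:ℝ), ∀ x ∈ Set.Icc 0 L, σmin ≤ deriv f (u x t) :=
    fun t ht x hx => hs₀min (hbound t ht x hx)
  -- mass conservation
  set N : ℝ → ℝ := fun t => ∫ x in (0:ℝ)..L, u x t with hNdef
  have hN' : ∀ t > (0:ℝ), HasDerivAt N 0 t := by
    intro t ht
    have hd := aux_hasDerivAt_integral L hL u (fun x s => pdt (Set.Ici 0) u x s) ht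
      hucont hu.2.2.2.2.2.2 (fun x hx s hs => htime x hx s hs)
    have hzero : ∫ x in (0:ℝ)..L, pdt (Set.Ici 0) u x t = 0 := by
      have h1 : ∫ x in (0:ℝ)..L, pdt (Set.Ici 0) u x t
          = ∫ x in (0:ℝ)..L, Efn L f u x t := by
        apply intervalIntegral.integral_congr
        intro x hx
        rw [Set.uIcc_of_le (le_of_lt hL)] at hx
        exact hPDE x hx t (le_of_lt ht)
      rw [h1, aux_ftc hL (le_of_lt hL) (le_refl 0) (le_refl L)
        (hEd t (le_of_lt ht)) (hEslice t (le_of_lt ht)),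
        (hBCW t (le_of_lt ht)).1, (hBCW t (le_of_lt ht)).2, sub_zero]
    rw [hzero] at hd
    exact hd
  have hNconst : ∀ s t : ℝ, 0 < s → s ≤ t → N t = N s := by
    intro s t hs hst
    rcases eq_or_lt_of_le hst with rfl | hlt
    · rfl
    have hkey := intervalIntegral.integral_eq_sub_of_hasDeriv_right_of_le (le_of_lt hlt)
      (f := N) (f' := fun _ => (0:ℝ))
      (fun τ hτ => (hN' τ (lt_of_lt_of_le hs hτ.1)).continuousAt.continuousWithinAt)
      (fun τ hτ => (hN' τ (lt_trans hs hτ.1)).hasDerivWithinAt)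
      intervalIntegrable_const
    rw [intervalIntegral.integral_zero] at hkey
    linarith [hkey]
  have hN0 : N 0 = ∫ x in (0:ℝ)..L, u₀ x := by
    apply intervalIntegral.integral_congr_ae
    have hae : ∀ᵐ x : ℝ, x ≠ L := by
      rw [ae_iff]
      have hset : {x : ℝ | ¬x ≠ L} = {L} := by ext y; simp
      rw [hset]
      exact Real.volume_singleton
    filter_upwards [hae] with x hx hmem
    rw [Set.uIoc_of_le (le_of_lt hL)] at hmem
    exact husol.2.1 x ⟨hmem.1, lt_of_le_of_ne hmem.2 hx⟩
  have hNval : ∀ t : ℝ, 0 < t → N t = L * c := by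
    intro t ht
    have h1 : Tendsto N (𝓝[>] (0:ℝ)) (𝓝 (N 0)) :=
      aux_tendsto_integral L hL u (hucont.mono (Set.prod_mono_right Set.Icc_subset_Ici_self))
    have h2 : Tendsto N (𝓝[>] (0:ℝ)) (𝓝 (N t)) := by
      apply Tendsto.congr' _ tendsto_const_nhds
      filter_upwards [Ioo_mem_nhdsGT_of_mem (Set.left_mem_Ico.mpr ht)] with s hs
      exact hNconst s t hs.1 (le_of_lt hs.2)
    have hNt0 : N t = N 0 := tendsto_nhds_unique h2 h1
    rw [hNt0, hN0, hubar]
    rw [intervalIntegral.integral_of_le (le_of_lt hL), MeasureTheory.integral_Ioc_eq_integral_Ioo]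
    field_simp
  -- energy functional
  set Q : ℝ → ℝ := fun t => ∫ x in (0:ℝ)..L, deriv f (u x t) * (pdx L u x t)^2 with hQdef
  set V : ℝ → ℝ := fun t => ∫ x in (0:ℝ)..L, (u x t - c)^2 with hVdef
  have hV' : ∀ t > (0:ℝ), HasDerivAt V (-2 * Q t) t := by
    intro t ht
    have ht' : (0:ℝ) ≤ t := le_of_lt ht
    have hd := aux_hasDerivAt_integral L hL (fun x s => (u x s - c)^2)
      (fun x s => 2 * (u x s - c) * pdt (Set.Ici 0) u x s) ht
      ((hucont.sub continuousOn_const).pow 2)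
      ((continuousOn_const.mul (hucont.sub continuousOn_const)).mul hu.2.2.2.2.2.2)
      (by intro x hx s hs
          have h1 := ((htime x hx s hs).sub_const c).pow 2
          exact h1.congr_deriv (by simp))
    have key : ∫ x in (0:ℝ)..L, 2 * (u x t - c) * pdt (Set.Ici 0) u x t = -2 * Q t := by
      have hcongr : ∫ x in (0:ℝ)..L, 2 * (u x t - c) * pdt (Set.Ici 0) u x t
          = ∫ x in (0:ℝ)..L, 2 * (u x t - c) * Efn L f u x t := by
        apply intervalIntegral.integral_congr
        intro x hx
        rw [Set.uIcc_of_le (le_of_lt hL)] at hx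
        simp only
        rw [hPDE x hx t ht']
      have hG : ∀ x ∈ Set.Icc (0:ℝ) L,
          HasDerivWithinAt (fun y => 2 * (u y t - c) * Wfn L f u y t)
          (2 * pdx L u x t * Wfn L f u x t + 2 * (u x t - c) * Efn L f u x t)
          (Set.Icc 0 L) x := by
        intro x hx
        have h1 : HasDerivWithinAt (fun y => 2 * (u y t - c)) (2 * pdx L u x t)
            (Set.Icc 0 L) x :=
          (((hu.1 t ht' x hx).hasDerivWithinAt).sub_const c).const_mul 2
        exact h1.mul (hEd t ht' x hx)
      have hgc : ContinuousOn (fun x => 2 * pdx L u x t * Wfn L f u x t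
          + 2 * (u x t - c) * Efn L f u x t) (Set.Icc 0 L) := by
        apply ContinuousOn.add
        · exact (continuousOn_const.mul (hpdxslice t ht')).mul (hWslice t ht')
        · exact (continuousOn_const.mul ((hslice t ht').sub continuousOn_const)).mul
            (hEslice t ht')
      have hftc := aux_ftc hL (le_of_lt hL) (le_refl 0) (le_refl L) hG hgc
      rw [(hBCW t ht').1, (hBCW t ht').2] at hftc
      simp only [mul_zero, sub_zero] at hftc
      have hi1 : IntervalIntegrable (fun x => 2 * pdx L u x t * Wfn L f u x t) volume 0 L := by
        apply ContinuousOn.intervalIntegrable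
        rw [Set.uIcc_of_le (le_of_lt hL)]
        exact (continuousOn_const.mul (hpdxslice t ht')).mul (hWslice t ht')
      have hi2 : IntervalIntegrable (fun x => 2 * (u x t - c) * Efn L f u x t) volume 0 L := by
        apply ContinuousOn.intervalIntegrable
        rw [Set.uIcc_of_le (le_of_lt hL)]
        exact (continuousOn_const.mul ((hslice t ht').sub continuousOn_const)).mul
          (hEslice t ht')
      rw [intervalIntegral.integral_add hi1 hi2] at hftc
      have hQeq : ∫ x in (0:ℝ)..L, 2 * pdx L u x t * Wfn L f u x t
          = 2 * ∫ x in (0:ℝ)..L, deriv f (u x t) * (pdx L u x t)^2 := by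
        rw [← intervalIntegral.integral_const_mul]
        apply intervalIntegral.integral_congr
        intro x hx
        simp only
        unfold Wfn
        ring
      rw [hcongr, hQdef]
      simp only
      linarith [hftc, hQeq]
    rw [key] at hd
    exact hd
  have hVnonneg : ∀ t, 0 ≤ V t := fun t =>
    intervalIntegral.integral_nonneg (le_of_lt hL) (fun x _ => sq_nonneg _)
  -- existence of arbitrarily late times with small dissipation
  have hsmall : ∀ δ > (0:ℝ), ∀ T ≥ (1:ℝ), ∃ t ≥ T, Q t < δ := by
    intro δ hδ T hT
    by_contra hcon
    push_neg at hcon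
    set S := T + V T / δ + 1 with hSdef
    have hVT := hVnonneg T
    have hTS : T ≤ S := by
      rw [hSdef]
      have : 0 ≤ V T / δ := div_nonneg hVT (le_of_lt hδ)
      linarith
    have hderivh : ∀ s : ℝ, 0 < s → HasDerivAt (fun s' => V s' + 2*δ*s') (-2 * Q s + 2*δ) s := by
      intro s hs0
      have h2 : HasDerivAt (fun s' : ℝ => 2*δ*s') (2*δ) s := by
        simpa using (hasDerivAt_id s).const_mul (2*δ)
      exact (hV' s hs0).add h2
    have hanti : AntitoneOn (fun s => V s + 2*δ*s) (Set.Icc T S) := by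
      apply antitoneOn_of_deriv_nonpos (convex_Icc _ _)
      · intro s hs
        have hs0 : (0:ℝ) < s := lt_of_lt_of_le one_pos (le_trans hT hs.1)
        exact (hderivh s hs0).continuousAt.continuousWithinAt
      · intro s hs
        rw [interior_Icc] at hs
        have hs0 : (0:ℝ) < s := lt_of_lt_of_le one_pos (le_trans hT (le_of_lt hs.1))
        exact (hderivh s hs0).differentiableAt.differentiableWithinAt
      · intro s hs
        rw [interior_Icc] at hs
        have hs0 : (0:ℝ) < s := lt_of_lt_of_le one_pos (le_trans hT (le_of_lt hs.1))
        rw [(hderivh s hs0).deriv]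
        have := hcon s (le_of_lt hs.1)
        linarith
    have h1 := hanti (Set.left_mem_Icc.mpr hTS) (Set.right_mem_Icc.mpr hTS) hTS
    have h2 := hVnonneg S
    have hcancel : 2*δ*(V T / δ) = 2 * V T := by field_simp
    rw [hSdef] at h1
    simp only at h1
    nlinarith [h1, h2, hcancel]
  -- pointwise estimate at times of small dissipation
  set lam := ε / (4 * L) with hlamdef
  have hlampos : 0 < lam := by rw [hlamdef]; positivity
  set δ := σmin * lam * ε / 8 with hδdef
  have hδpos : 0 < δ := by rw [hδdef]; positivity
  set R : ℝ → ℝ := fun t => ∫ x in (0:ℝ)..L, (pdx L u x t)^2 with hRdef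
  have hsup : ∀ t > (0:ℝ), Q t < δ → ∀ x ∈ Set.Icc (0:ℝ) L, |u x t - c| ≤ ε/2 := by
    intro t ht hQt
    have ht' : (0:ℝ) ≤ t := le_of_lt ht
    have hipdx2 : IntervalIntegrable (fun x => (pdx L u x t)^2) volume 0 L := by
      apply ContinuousOn.intervalIntegrable
      rw [Set.uIcc_of_le (le_of_lt hL)]
      exact (hpdxslice t ht').pow 2
    have hiQ : IntervalIntegrable (fun x => deriv f (u x t) * (pdx L u x t)^2) volume 0 L := by
      apply ContinuousOn.intervalIntegrable
      rw [Set.uIcc_of_le (le_of_lt hL)]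
      exact (((f_deriv_contDiff hf).continuous.comp_continuousOn (hslice t ht')).mul
        ((hpdxslice t ht').pow 2))
    have hiσR : IntervalIntegrable (fun x => σmin * (pdx L u x t)^2) volume 0 L :=
      hipdx2.const_mul σmin
    have hQR : σmin * R t ≤ Q t := by
      rw [hRdef]
      simp only
      rw [← intervalIntegral.integral_const_mul]
      apply intervalIntegral.integral_mono_on (le_of_lt hL) hiσR hiQ
      intro x hx
      exact mul_le_mul_of_nonneg_right (hσlow t ht' x hx) (sq_nonneg _)
    have hRsmall : R t < lam * ε / 8 := by
      have h1 : σmin * R t < δ := lt_of_le_of_lt hQR hQt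
      rw [hδdef] at h1
      have := (mul_lt_mul_iff_right₀ hσminpos).mp (by linarith [h1] : σmin * R t < σmin * (lam * ε / 8))
      exact this
    -- mean value: u(·,t) attains c
    obtain ⟨yP', hyP', hmaxP⟩ := hIccK.exists_isMaxOn hIccNe (hslice t ht')
    obtain ⟨yM', hyM', hminM⟩ := hIccK.exists_isMinOn hIccNe (hslice t ht')
    have hintu : IntervalIntegrable (fun x => u x t) volume 0 L := by
      apply ContinuousOn.intervalIntegrable
      rw [Set.uIcc_of_le (le_of_lt hL)]
      exact hslice t ht'
    have hNt : N t = L * c := hNval t ht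
    have hlow : u yM' t ≤ c := by
      by_contra hgt
      push_neg at hgt
      have hm : L * u yM' t ≤ N t := by
        have := intervalIntegral.integral_mono_on (le_of_lt hL)
          (_root_.intervalIntegrable_const (c := u yM' t)) hintu
          (fun y hy => hminM hy)
        rw [intervalIntegral.integral_const, sub_zero, smul_eq_mul] at this
        exact this
      rw [hNt] at hm
      nlinarith [hm, hgt, hL]
    have hhigh : c ≤ u yP' t := by
      by_contra hgt
      push_neg at hgt
      have hm : N t ≤ L * u yP' t := by
        have := intervalIntegral.integral_mono_on (le_of_lt hL)
          hintu (_root_.intervalIntegrable_const (c := u yP' t))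
          (fun y hy => hmaxP hy)
        rw [intervalIntegral.integral_const, sub_zero, smul_eq_mul] at this
        exact this
      rw [hNt] at hm
      nlinarith [hm, hgt, hL]
    have hsubI : Set.uIcc yM' yP' ⊆ Set.Icc (0:ℝ) L := Set.uIcc_subset_Icc hyM' hyP'
    have hIVT := intermediate_value_uIcc ((hslice t ht').mono hsubI)
    have hcmem : c ∈ Set.uIcc (u yM' t) (u yP' t) := by
      rw [Set.uIcc_of_le (le_trans hlow hhigh)]
      exact ⟨hlow, hhigh⟩
    obtain ⟨xs, hxs, hxsval⟩ := hIVT hcmem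
    have hxsI : xs ∈ Set.Icc (0:ℝ) L := hsubI hxs
    -- |u x t - c| ≤ ∫ |pdx|
    have hiabs : IntervalIntegrable (fun y => |pdx L u y t|) volume 0 L := by
      apply ContinuousOn.intervalIntegrable
      rw [Set.uIcc_of_le (le_of_lt hL)]
      exact (hpdxslice t ht').abs
    have habsnn : 0 ≤ᶠ[MeasureTheory.ae (volume.restrict (Set.Ioc (0:ℝ) L))]
        fun y => |pdx L u y t| :=
      Eventually.of_forall (fun y => abs_nonneg _)
    intro x hx
    have habs : |u x t - c| ≤ ∫ y in (0:ℝ)..L, |pdx L u y t| := by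
      rcases le_total xs x with hxx | hxx
      · have hftc := aux_ftc (G := fun y => u y t) (g := fun y => pdx L u y t) hL hxx hxsI.1 hx.2
          (fun y hy => (hu.1 t ht' y hy).hasDerivWithinAt) (hpdxslice t ht')
        calc |u x t - c| = |∫ y in xs..x, pdx L u y t| := by
              rw [hftc, ← hxsval]
          _ ≤ ∫ y in xs..x, |pdx L u y t| := intervalIntegral.abs_integral_le_integral_abs hxx
          _ ≤ ∫ y in (0:ℝ)..L, |pdx L u y t| :=
              intervalIntegral.integral_mono_interval hxsI.1 hxx hx.2 habsnn hiabs
      · have hftc := aux_ftc (G := fun y => u y t) (g := fun y => pdx L u y t) hL hxx hx.1 hxsI.2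
          (fun y hy => (hu.1 t ht' y hy).hasDerivWithinAt) (hpdxslice t ht')
        calc |u x t - c| = |∫ y in x..xs, pdx L u y t| := by
              rw [hftc, ← hxsval, abs_sub_comm]
          _ ≤ ∫ y in x..xs, |pdx L u y t| := intervalIntegral.abs_integral_le_integral_abs hxx
          _ ≤ ∫ y in (0:ℝ)..L, |pdx L u y t| :=
              intervalIntegral.integral_mono_interval hx.1 hxx hxsI.2 habsnn hiabs
    -- ∫|pdx| ≤ R/(2λ) + λL/2
    have hpt : ∀ y ∈ Set.Icc (0:ℝ) L,
        |pdx L u y t| ≤ (pdx L u y t)^2 / (2*lam) + lam/2 := by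
      intro y _
      have hrw : (pdx L u y t)^2 / (2*lam) + lam/2
          = ((pdx L u y t)^2 + lam^2) / (2*lam) := by
        field_simp
      rw [hrw, le_div_iff₀ (by positivity)]
      nlinarith [sq_nonneg (|pdx L u y t| - lam), sq_abs (pdx L u y t)]
    have hirhs : IntervalIntegrable (fun y => (pdx L u y t)^2 / (2*lam) + lam/2) volume 0 L := by
      apply IntervalIntegrable.add
      · exact hipdx2.div_const _
      · exact intervalIntegrable_const
    have hintabs : ∫ y in (0:ℝ)..L, |pdx L u y t| ≤ R t / (2*lam) + lam*L/2 := by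
      have hm := intervalIntegral.integral_mono_on (le_of_lt hL) hiabs hirhs hpt
      rw [intervalIntegral.integral_add (hipdx2.div_const _) intervalIntegrable_const,
        intervalIntegral.integral_div, intervalIntegral.integral_const,
        sub_zero, smul_eq_mul] at hm
      calc ∫ y in (0:ℝ)..L, |pdx L u y t|
          ≤ (∫ y in (0:ℝ)..L, (pdx L u y t)^2) / (2*lam) + L * (lam/2) := hm
        _ = R t / (2*lam) + lam*L/2 := by rw [hRdef]; ring_nf
    have hfin1 : R t / (2*lam) < ε/16 := by
      rw [div_lt_iff₀ (by positivity)]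
      calc R t < lam * ε / 8 := hRsmall
        _ = ε/16 * (2*lam) := by ring
    have hfin2 : lam * L / 2 = ε / 8 := by
      rw [hlamdef]
      field_simp
      ring
    calc |u x t - c| ≤ ∫ y in (0:ℝ)..L, |pdx L u y t| := habs
      _ ≤ R t / (2*lam) + lam*L/2 := hintabs
      _ ≤ ε/16 + ε/8 := by linarith [hfin1, hfin2]
      _ ≤ ε/2 := by linarith
  -- final assembly
  obtain ⟨ts, hts, hQts⟩ := hsmall δ hδpos 1 (le_refl _)
  have hts0 : (0:ℝ) < ts := lt_of_lt_of_le one_pos hts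
  refine ⟨ts, ?_⟩
  intro t ht x hx
  have hxI : x ∈ Set.Icc (0:ℝ) L := Set.Ioo_subset_Icc_self hx
  have hsupb := hsup ts hts0 hQts
  obtain ⟨yP', hyP', hmaxP⟩ := hIccK.exists_isMaxOn hIccNe (hslice ts (le_of_lt hts0))
  obtain ⟨yM', hyM', hminM⟩ := hIccK.exists_isMinOn hIccNe (hslice ts (le_of_lt hts0))
  have h1 : u x t ≤ u yP' ts :=
    maxp ts t yP' (le_of_lt hts0) ht hyP' (fun y hy => hmaxP hy) x hxI
  have h2 : u yM' ts ≤ u x t :=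
    minp ts t yM' (le_of_lt hts0) ht hyM' (fun y hy => hminM hy) x hxI
  have h3 := abs_le.mp (hsupb yP' hyP')
  have h4 := abs_le.mp (hsupb yM' hyM')
  have hband : |u x t - c| ≤ ε/2 := abs_le.mpr ⟨by linarith [h4.1], by linarith [h3.2]⟩
  have : |u x t - ubar| ≤ ε/2 := hband
  linarith [this, hε]
end

section
/- Under the stated hypotheses (ρ ∈ C²(ℝ) with σ=ρ′>0 everywhere, u a classical solution of the initial/no-flux problem), there exists a constant C > 0 depending only on L such that, with m₀ = min_{Ω̄} u₀, M₀ = max_{Ω̄} u₀, s₀ = min_{[m₀,M₀]} σ > 0 and ū₀ = (1/L)∫₀^L u₀, one has ‖u(·,t) − ū₀‖_{L²(Ω)} ≤ ‖u₀ − ū₀‖_{L²(Ω)} · e^{−s₀ C t} for all t > 0. -/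
open MeasureTheory Set
open Filter Topology

lemma eqOn_Icc_of_eqOn_Ioo {L : ℝ} (hL : 0 < L) {f g : ℝ → ℝ}
    (hf : ContinuousOn f (Icc 0 L)) (hg : ContinuousOn g (Icc 0 L))
    (h : EqOn f g (Ioo 0 L)) : EqOn f g (Icc 0 L) := by
  intro x hx
  have hx' : x ∈ closure (Ioo (0:ℝ) L) := by rwa [closure_Ioo hL.ne]
  have hne : (𝓝[Ioo (0:ℝ) L] x).NeBot := mem_closure_iff_nhdsWithin_neBot.mp hx'
  have hsub : Ioo (0:ℝ) L ⊆ Icc 0 L := Ioo_subset_Icc_self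
  have h1 : Filter.Tendsto f (𝓝[Ioo (0:ℝ) L] x) (𝓝 (f x)) :=
    (hf x hx).mono_left (nhdsWithin_mono _ hsub)
  have h2 : Filter.Tendsto g (𝓝[Ioo (0:ℝ) L] x) (𝓝 (g x)) :=
    (hg x hx).mono_left (nhdsWithin_mono _ hsub)
  have h1' : Filter.Tendsto g (𝓝[Ioo (0:ℝ) L] x) (𝓝 (f x)) :=
    h1.congr' (by filter_upwards [self_mem_nhdsWithin] using fun y hy => h hy)
  exact tendsto_nhds_unique h1' h2


noncomputable def qfun (L : ℝ) (f : ℝ → ℝ) (u : ℝ → ℝ → ℝ) (x t : ℝ) : ℝ :=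
  deriv (deriv f) (u x t) * (pdx L u x t)^2 + deriv f (u x t) * pdxx L u x t

lemma contDiff_one_deriv {f : ℝ → ℝ} (hf : ContDiff ℝ 2 f) : ContDiff ℝ 1 (deriv f) :=
  (contDiff_succ_iff_deriv.mp (show ContDiff ℝ (1+1) f by exact_mod_cast hf)).2.2

section helpers
variable {L : ℝ}

lemma contOn_slice_x {J : Set ℝ} {g : ℝ → ℝ → ℝ}
    (h : ContinuousOn (fun p : ℝ × ℝ => g p.1 p.2) (Set.Icc 0 L ×ˢ J))
    {t : ℝ} (ht : t ∈ J) : ContinuousOn (fun x => g x t) (Icc 0 L) :=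
  h.comp (Continuous.continuousOn (continuous_id.prodMk continuous_const))
    (fun y hy => ⟨hy, ht⟩)

lemma contOn_slice_t {J : Set ℝ} {g : ℝ → ℝ → ℝ}
    (h : ContinuousOn (fun p : ℝ × ℝ => g p.1 p.2) (Set.Icc 0 L ×ˢ J))
    {x : ℝ} (hx : x ∈ Icc 0 L) : ContinuousOn (fun t => g x t) J :=
  h.comp (Continuous.continuousOn (continuous_const.prodMk continuous_id))
    (fun s hs => ⟨hx, hs⟩)

lemma hasDerivAt_interior {g : ℝ → ℝ} (hg : DifferentiableOn ℝ g (Icc 0 L))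
    {x : ℝ} (hx : x ∈ Ioo 0 L) : HasDerivAt g (derivWithin g (Icc 0 L) x) x := by
  have hmem : Icc (0:ℝ) L ∈ 𝓝 x := Icc_mem_nhds hx.1 hx.2
  have := ((hg x (Ioo_subset_Icc_self hx)).differentiableAt hmem)
  rw [derivWithin_of_mem_nhds hmem]
  exact this.hasDerivAt

lemma flux_inner_deriv {f : ℝ → ℝ} (hf : Differentiable ℝ f) {u : ℝ → ℝ → ℝ} {t : ℝ}
    (hu : DifferentiableOn ℝ (fun y => u y t) (Icc 0 L))
    {x : ℝ} (hx : x ∈ Icc 0 L) :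
    HasDerivWithinAt (fun z => f (u z t)) (deriv f (u x t) * pdx L u x t) (Icc 0 L) x := by
  have h1 : HasDerivWithinAt (fun y => u y t) (pdx L u x t) (Icc 0 L) x :=
    (hu x hx).hasDerivWithinAt
  have h2 : HasDerivAt f (deriv f (u x t)) (u x t) := (hf _).hasDerivAt
  exact h2.comp_hasDerivWithinAt x h1

lemma flux_inner_derivWithin (hL : 0 < L) {f : ℝ → ℝ} (hf : Differentiable ℝ f)
    {u : ℝ → ℝ → ℝ} {t : ℝ}
    (hu : DifferentiableOn ℝ (fun y => u y t) (Icc 0 L))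
    {x : ℝ} (hx : x ∈ Icc 0 L) :
    derivWithin (fun z => f (u z t)) (Icc 0 L) x = deriv f (u x t) * pdx L u x t :=
  (flux_inner_deriv hf hu hx).derivWithin ((uniqueDiffOn_Icc hL) x hx)

lemma flux_h_deriv {f : ℝ → ℝ} (hf : ContDiff ℝ 2 f) {u : ℝ → ℝ → ℝ} {t : ℝ}
    (hu : DifferentiableOn ℝ (fun y => u y t) (Icc 0 L))
    (hux : DifferentiableOn ℝ (fun y => pdx L u y t) (Icc 0 L))
    {x : ℝ} (hx : x ∈ Icc 0 L) :
    HasDerivWithinAt (fun y => deriv f (u y t) * pdx L u y t) (qfun L f u x t) (Icc 0 L) x := by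
  have hf' := contDiff_one_deriv hf
  have h1 : HasDerivWithinAt (fun y => u y t) (pdx L u x t) (Icc 0 L) x :=
    (hu x hx).hasDerivWithinAt
  have h2 : HasDerivAt (deriv f) (deriv (deriv f) (u x t)) (u x t) :=
    ((hf'.differentiable one_ne_zero) _).hasDerivAt
  have h3 : HasDerivWithinAt (fun y => deriv f (u y t))
      (deriv (deriv f) (u x t) * pdx L u x t) (Icc 0 L) x := by
    have := h2.comp_hasDerivWithinAt x h1; exact this
  have h4 : HasDerivWithinAt (fun y => pdx L u y t) (pdxx L u x t) (Icc 0 L) x :=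
    (hux x hx).hasDerivWithinAt
  have h5 := h3.mul h4
  have : deriv (deriv f) (u x t) * pdx L u x t * pdx L u x t
      + deriv f (u x t) * pdxx L u x t = qfun L f u x t := by
    simp [qfun]; ring
  rwa [this] at h5

/-- fluxxx = qfun on Icc -/
lemma fluxxx_eq_qfun (hL : 0 < L) {f : ℝ → ℝ} (hf : ContDiff ℝ 2 f) {u : ℝ → ℝ → ℝ} {t : ℝ}
    (hu : DifferentiableOn ℝ (fun y => u y t) (Icc 0 L))
    (hux : DifferentiableOn ℝ (fun y => pdx L u y t) (Icc 0 L))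
    {x : ℝ} (hx : x ∈ Icc 0 L) :
    fluxxx L f u x t = qfun L f u x t := by
  have hcong : derivWithin (fun y => derivWithin (fun z => f (u z t)) (Set.Icc 0 L) y)
      (Icc 0 L) x = derivWithin (fun y => deriv f (u y t) * pdx L u y t) (Icc 0 L) x := by
    apply derivWithin_congr
    · exact fun y hy => flux_inner_derivWithin hL (hf.differentiable (by norm_num)) hu hy
    · exact flux_inner_derivWithin hL (hf.differentiable (by norm_num)) hu hx
  rw [fluxxx, hcong]
  exact (flux_h_deriv hf hu hux hx).derivWithin ((uniqueDiffOn_Icc hL) x hx)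


/-- qfun slice continuity -/
lemma contOn_qfun_slice {L : ℝ} {f : ℝ → ℝ} (hf : ContDiff ℝ 2 f) {u : ℝ → ℝ → ℝ} {t : ℝ}
    (h4 : ContinuousOn (fun p : ℝ × ℝ => u p.1 p.2) (Icc 0 L ×ˢ Ici 0))
    (h5 : ContinuousOn (fun p : ℝ × ℝ => pdx L u p.1 p.2) (Icc 0 L ×ˢ Ici 0))
    (h6 : ContinuousOn (fun p : ℝ × ℝ => pdxx L u p.1 p.2) (Icc 0 L ×ˢ Ici 0))
    (ht : t ∈ Ici (0:ℝ)) :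
    ContinuousOn (fun x => qfun L f u x t) (Icc 0 L) := by
  have hu := contOn_slice_x h4 ht
  have hux := contOn_slice_x h5 ht
  have huxx := contOn_slice_x h6 ht
  have hσ : Continuous (deriv f) := hf.continuous_deriv (by norm_num)
  have hσ' : Continuous (deriv (deriv f)) := (contDiff_one_deriv hf).continuous_deriv le_rfl
  exact ((hσ'.comp_continuousOn hu).mul (hux.pow 2)).add
    ((hσ.comp_continuousOn hu).mul huxx)

/-- Frequently small nonpositive slope at a spatial max point -/
lemma freq_slope_nonpos {L : ℝ} (hL : 0 < L) {f : ℝ → ℝ} (hσpos : ∀ s, 0 < deriv f s)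
    {u : ℝ → ℝ → ℝ} {t : ℝ} (ht : t ∈ Ici (0:ℝ))
    (h1 : ∀ t ∈ Ici (0:ℝ), DifferentiableOn ℝ (fun y => u y t) (Icc 0 L))
    (h4 : ContinuousOn (fun p : ℝ × ℝ => u p.1 p.2) (Icc 0 L ×ˢ Ici 0))
    {x : ℝ} (hx : x ∈ Icc 0 L)
    (hmax : ∀ y ∈ Icc 0 L, u y t ≤ u x t) (hpdx : pdx L u x t = 0) :
    ∃ᶠ c in 𝓝[Icc 0 L \ {x}] x,
      slope (fun y => deriv f (u y t) * pdx L u y t) x c ≤ 0 := by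
  set h : ℝ → ℝ := fun y => deriv f (u y t) * pdx L u y t with hh
  have hhx : h x = 0 := by simp [hh, hpdx]
  have hgc : ContinuousOn (fun y => u y t) (Icc 0 L) := contOn_slice_x h4 ht
  rw [Filter.frequently_iff]
  intro U hU
  rcases Metric.mem_nhdsWithin_iff.mp hU with ⟨δ, hδ, hball⟩
  rcases lt_or_eq_of_le hx.2 with hxL | hxL
  · -- x < L
    set y := min (x + δ) L with hy
    have hxy : x < y := lt_min (by linarith) hxL
    have hyL : y ≤ L := min_le_right _ _
    have hsub : Icc x y ⊆ Icc 0 L := Icc_subset_Icc hx.1 hyL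
    have hder : ∀ c ∈ Ioo x y, HasDerivAt (fun y => u y t) (pdx L u c t) c := fun c hc =>
      hasDerivAt_interior (h1 t ht) ⟨lt_of_le_of_lt hx.1 hc.1, lt_of_lt_of_le hc.2 hyL⟩
    rcases exists_hasDerivAt_eq_slope (fun y => u y t) (fun c => pdx L u c t) hxy
      (hgc.mono hsub) hder with ⟨c, hc, hceq⟩
    have hcIcc : c ∈ Icc 0 L := hsub ⟨le_of_lt hc.1, le_of_lt hc.2⟩
    have hpdxc : pdx L u c t ≤ 0 := by
      rw [hceq]
      apply div_nonpos_of_nonpos_of_nonneg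
      · have := hmax y (hsub ⟨le_of_lt hxy, le_refl y⟩); linarith
      · linarith [hxy]
    refine ⟨c, hball ⟨?_, hcIcc, ?_⟩, ?_⟩
    · rw [Metric.mem_ball, Real.dist_eq, abs_lt]
      have h1' : c < y := hc.2
      have h2' : y ≤ x + δ := min_le_left _ _
      constructor <;> linarith [hc.1]
    · exact fun hcx => absurd (hcx : c = x) (ne_of_gt hc.1)
    · rw [slope_def_field, hhx]
      apply div_nonpos_of_nonpos_of_nonneg
      · simp only [sub_zero, hh]
        exact mul_nonpos_of_nonneg_of_nonpos (le_of_lt (hσpos _)) hpdxc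
      · linarith [hc.1]
  · -- x = L
    have hx0 : 0 < x := hxL ▸ hL
    set y := max (x - δ) 0 with hy
    have hxy : y < x := max_lt (by linarith) hx0
    have hy0 : 0 ≤ y := le_max_right _ _
    have hsub : Icc y x ⊆ Icc 0 L := Icc_subset_Icc hy0 hx.2
    have hder : ∀ c ∈ Ioo y x, HasDerivAt (fun y => u y t) (pdx L u c t) c := fun c hc =>
      hasDerivAt_interior (h1 t ht) ⟨lt_of_le_of_lt hy0 hc.1, lt_of_lt_of_le hc.2 hx.2⟩
    rcases exists_hasDerivAt_eq_slope (fun y => u y t) (fun c => pdx L u c t) hxy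
      (hgc.mono hsub) hder with ⟨c, hc, hceq⟩
    have hcIcc : c ∈ Icc 0 L := hsub ⟨le_of_lt hc.1, le_of_lt hc.2⟩
    have hpdxc : 0 ≤ pdx L u c t := by
      rw [hceq]
      apply div_nonneg
      · have := hmax y (hsub ⟨le_refl y, le_of_lt hxy⟩); linarith
      · linarith [hxy]
    refine ⟨c, hball ⟨?_, hcIcc, ?_⟩, ?_⟩
    · rw [Metric.mem_ball, Real.dist_eq, abs_lt]
      have h1' : y < c := hc.1
      have h2' : x - δ ≤ y := le_max_left _ _
      constructor <;> linarith [hc.2]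
    · exact fun hcx => absurd (hcx : c = x) (ne_of_lt hc.2)
    · rw [slope_def_field, hhx]
      apply div_nonpos_of_nonneg_of_nonpos
      · simp only [sub_zero, hh]
        exact mul_nonneg (le_of_lt (hσpos _)) hpdxc
      · linarith [hc.2]
lemma mp_upper {L : ℝ} (hL : 0 < L) {f : ℝ → ℝ} (hf : ContDiff ℝ 2 f)
    (hσpos : ∀ s, 0 < deriv f s) {u : ℝ → ℝ → ℝ}
    (h1 : ∀ t ∈ Ici (0:ℝ), DifferentiableOn ℝ (fun y => u y t) (Icc 0 L))
    (h2 : ∀ t ∈ Ici (0:ℝ), DifferentiableOn ℝ (fun y => pdx L u y t) (Icc 0 L))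
    (h3 : ∀ x ∈ Icc 0 L, DifferentiableOn ℝ (fun s => u x s) (Ici 0))
    (h4 : ContinuousOn (fun p : ℝ × ℝ => u p.1 p.2) (Icc 0 L ×ˢ Ici 0))
    (h5 : ContinuousOn (fun p : ℝ × ℝ => pdx L u p.1 p.2) (Icc 0 L ×ˢ Ici 0))
    (h6 : ContinuousOn (fun p : ℝ × ℝ => pdxx L u p.1 p.2) (Icc 0 L ×ˢ Ici 0))
    (h7 : ContinuousOn (fun p : ℝ × ℝ => pdt (Ici 0) u p.1 p.2) (Icc 0 L ×ˢ Ici 0))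
    (hpde : ∀ x ∈ Ioo 0 L, ∀ t ∈ Ioi (0:ℝ), pdt (Ici 0) u x t = fluxxx L f u x t)
    (hbc : ∀ t ∈ Ioi (0:ℝ),
      deriv f (u 0 t) * pdx L u 0 t = 0 ∧ deriv f (u L t) * pdx L u L t = 0)
    {M : ℝ} (hM : ∀ x ∈ Icc 0 L, u x 0 ≤ M) :
    ∀ x ∈ Icc 0 L, ∀ t, 0 ≤ t → u x t ≤ M := by
  have core : ∀ T > (0:ℝ), ∀ ε > (0:ℝ), ∀ x ∈ Icc 0 L, ∀ t ∈ Icc 0 T,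
      u x t ≤ M + ε * T := by
    intro T hT ε hε
    set K : Set (ℝ × ℝ) := Icc 0 L ×ˢ Icc 0 T with hK
    set w : ℝ × ℝ → ℝ := fun p => u p.1 p.2 - ε * p.2 with hw
    have hKsub : K ⊆ Icc 0 L ×ˢ Ici 0 := prod_mono_right (Icc_subset_Ici_self)
    have hKc : IsCompact K := isCompact_Icc.prod isCompact_Icc
    have hKne : K.Nonempty := ⟨(0, 0), ⟨le_refl 0, hL.le⟩, ⟨le_refl 0, hT.le⟩⟩
    have hwc : ContinuousOn w K :=
      (h4.mono hKsub).sub ((continuous_const.mul continuous_snd).continuousOn)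
    obtain ⟨p, hpK, hpmax⟩ := hKc.exists_isMaxOn hKne hwc
    obtain ⟨hpx, hpt⟩ := hpK
    have hmaxle : ∀ q ∈ K, w q ≤ w p := fun q hq => hpmax hq
    have hwpM : w p ≤ M := by
      by_contra hcon
      push_neg at hcon
      have htpos : 0 < p.2 := by
        rcases lt_or_eq_of_le hpt.1 with h | h
        · exact h
        · exfalso
          have : w p = u p.1 0 := by rw [hw]; simp [← h]
          rw [this] at hcon
          exact absurd (hM p.1 hpx) (not_le.mpr hcon)
      have htmem : p.2 ∈ Ici (0:ℝ) := hpt.1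
      -- spatial max at fixed time p.2
      have hmaxx : ∀ y ∈ Icc 0 L, u y p.2 ≤ u p.1 p.2 := by
        intro y hy
        have := hmaxle (y, p.2) ⟨hy, hpt⟩
        simp only [hw] at this
        linarith
      -- zero spatial derivative
      have hpdx0 : pdx L u p.1 p.2 = 0 := by
        rcases lt_or_eq_of_le hpx.1 with hx0 | hx0
        · rcases lt_or_eq_of_le hpx.2 with hxL | hxL
          · -- interior
            have hd : HasDerivAt (fun y => u y p.2) (pdx L u p.1 p.2) p.1 :=
              hasDerivAt_interior (h1 p.2 htmem) ⟨hx0, hxL⟩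
            have hloc : IsLocalMax (fun y => u y p.2) p.1 :=
              Filter.eventually_of_mem (Icc_mem_nhds hx0 hxL) (fun y hy => hmaxx y hy)
            exact hloc.hasDerivAt_eq_zero hd
          · -- p.1 = L
            have hb := (hbc p.2 htpos).2
            rw [hxL]
            rcases mul_eq_zero.mp hb with h | h
            · exact absurd h (ne_of_gt (hσpos _))
            · exact h
        · -- p.1 = 0
          have hb := (hbc p.2 htpos).1
          rw [← hx0]
          rcases mul_eq_zero.mp hb with h | h
          · exact absurd h (ne_of_gt (hσpos _))
          · exact h
      -- time derivative lower bound
      have htime : ε ≤ pdt (Ici 0) u p.1 p.2 := by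
        have hmem : Ici (0:ℝ) ∈ 𝓝 p.2 := Ici_mem_nhds htpos
        have hdiff : DifferentiableAt ℝ (fun s => u p.1 s) p.2 :=
          (h3 p.1 hpx p.2 htpos.le).differentiableAt hmem
        have hd : HasDerivAt (fun s => u p.1 s) (pdt (Ici 0) u p.1 p.2) p.2 := by
          rw [pdt, derivWithin_of_mem_nhds hmem]; exact hdiff.hasDerivAt
        have htend := hasDerivAt_iff_tendsto_slope.mp hd
        have hne : (𝓝[Ioo (0:ℝ) p.2] p.2).NeBot := by
          apply mem_closure_iff_nhdsWithin_neBot.mp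
          rw [closure_Ioo (ne_of_lt htpos)]
          exact ⟨htpos.le, le_refl _⟩
        have htend' : Tendsto (slope (fun s => u p.1 s) p.2) (𝓝[Ioo (0:ℝ) p.2] p.2)
            (𝓝 (pdt (Ici 0) u p.1 p.2)) :=
          htend.mono_left (nhdsWithin_mono _ (fun s hs => ne_of_lt hs.2))
        refine ge_of_tendsto htend' ?_
        filter_upwards [self_mem_nhdsWithin] with s hs
        have hsK : (p.1, s) ∈ K := ⟨hpx, ⟨hs.1.le, hs.2.le.trans hpt.2⟩⟩
        have := hmaxle (p.1, s) hsK
        simp only [hw] at this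
        rw [slope_def_field]
        have hst : s - p.2 < 0 := by linarith [hs.2]
        rw [le_div_iff_of_neg hst]
        nlinarith
      -- pdt = qfun by density
      have hpdtq : pdt (Ici 0) u p.1 p.2 = qfun L f u p.1 p.2 := by
        have heq : EqOn (fun x => pdt (Ici 0) u x p.2) (fun x => qfun L f u x p.2)
            (Icc 0 L) := by
          apply eqOn_Icc_of_eqOn_Ioo hL (contOn_slice_x h7 htmem)
            (contOn_qfun_slice hf h4 h5 h6 htmem)
          intro z hz
          have hz2 := hpde z hz p.2 htpos
          show pdt (Ici 0) u z p.2 = qfun L f u z p.2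
          rw [hz2]
          exact fluxxx_eq_qfun hL hf (h1 p.2 htmem) (h2 p.2 htmem) (Ioo_subset_Icc_self hz)
        exact heq hpx
      -- qfun nonpositive
      have hqle : qfun L f u p.1 p.2 ≤ 0 := by
        have hfreq := freq_slope_nonpos hL hσpos htmem h1 h4 hpx hmaxx hpdx0
        have hder := flux_h_deriv hf (h1 p.2 htmem) (h2 p.2 htmem) hpx
        have htend := hasDerivWithinAt_iff_tendsto_slope.mp hder
        exact isClosed_Iic.mem_of_frequently_of_tendsto hfreq htend
      rw [hpdtq] at htime
      linarith
    intro x hx t ht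
    have := hmaxle (x, t) ⟨hx, ht⟩
    have h1' : u x t - ε * t ≤ M := le_trans this hwpM
    have h2' : ε * t ≤ ε * T := by
      apply mul_le_mul_of_nonneg_left ht.2 hε.le
    linarith
  intro x hx t ht
  rcases eq_or_lt_of_le ht with h | h
  · rw [← h]; exact hM x hx
  · apply le_of_forall_pos_le_add
    intro ε hε
    have := core t h (ε / t) (div_pos hε h) x hx t ⟨ht, le_refl t⟩
    rw [div_mul_cancel₀ ε (ne_of_gt h)] at this
    exact this
lemma freq_slope_nonneg {L : ℝ} (hL : 0 < L) {f : ℝ → ℝ} (hσpos : ∀ s, 0 < deriv f s)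
    {u : ℝ → ℝ → ℝ} {t : ℝ} (ht : t ∈ Ici (0:ℝ))
    (h1 : ∀ t ∈ Ici (0:ℝ), DifferentiableOn ℝ (fun y => u y t) (Icc 0 L))
    (h4 : ContinuousOn (fun p : ℝ × ℝ => u p.1 p.2) (Icc 0 L ×ˢ Ici 0))
    {x : ℝ} (hx : x ∈ Icc 0 L)
    (hmin : ∀ y ∈ Icc 0 L, u x t ≤ u y t) (hpdx : pdx L u x t = 0) :
    ∃ᶠ c in 𝓝[Icc 0 L \ {x}] x,
      0 ≤ slope (fun y => deriv f (u y t) * pdx L u y t) x c := by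
  set h : ℝ → ℝ := fun y => deriv f (u y t) * pdx L u y t with hh
  have hhx : h x = 0 := by simp [hh, hpdx]
  have hgc : ContinuousOn (fun y => u y t) (Icc 0 L) := contOn_slice_x h4 ht
  rw [Filter.frequently_iff]
  intro U hU
  rcases Metric.mem_nhdsWithin_iff.mp hU with ⟨δ, hδ, hball⟩
  rcases lt_or_eq_of_le hx.2 with hxL | hxL
  · set y := min (x + δ) L with hy
    have hxy : x < y := lt_min (by linarith) hxL
    have hyL : y ≤ L := min_le_right _ _
    have hsub : Icc x y ⊆ Icc 0 L := Icc_subset_Icc hx.1 hyL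
    have hder : ∀ c ∈ Ioo x y, HasDerivAt (fun y => u y t) (pdx L u c t) c := fun c hc =>
      hasDerivAt_interior (h1 t ht) ⟨lt_of_le_of_lt hx.1 hc.1, lt_of_lt_of_le hc.2 hyL⟩
    rcases exists_hasDerivAt_eq_slope (fun y => u y t) (fun c => pdx L u c t) hxy
      (hgc.mono hsub) hder with ⟨c, hc, hceq⟩
    have hcIcc : c ∈ Icc 0 L := hsub ⟨le_of_lt hc.1, le_of_lt hc.2⟩
    have hpdxc : 0 ≤ pdx L u c t := by
      rw [hceq]
      apply div_nonneg
      · have := hmin y (hsub ⟨le_of_lt hxy, le_refl y⟩); linarith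
      · linarith [hxy]
    refine ⟨c, hball ⟨?_, hcIcc, ?_⟩, ?_⟩
    · rw [Metric.mem_ball, Real.dist_eq, abs_lt]
      have h1' : c < y := hc.2
      have h2' : y ≤ x + δ := min_le_left _ _
      constructor <;> linarith [hc.1]
    · exact fun hcx => absurd (hcx : c = x) (ne_of_gt hc.1)
    · rw [slope_def_field, hhx]
      apply div_nonneg
      · simp only [sub_zero, hh]
        exact mul_nonneg (le_of_lt (hσpos _)) hpdxc
      · linarith [hc.1]
  · have hx0 : 0 < x := hxL ▸ hL
    set y := max (x - δ) 0 with hy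
    have hxy : y < x := max_lt (by linarith) hx0
    have hy0 : 0 ≤ y := le_max_right _ _
    have hsub : Icc y x ⊆ Icc 0 L := Icc_subset_Icc hy0 hx.2
    have hder : ∀ c ∈ Ioo y x, HasDerivAt (fun y => u y t) (pdx L u c t) c := fun c hc =>
      hasDerivAt_interior (h1 t ht) ⟨lt_of_le_of_lt hy0 hc.1, lt_of_lt_of_le hc.2 hx.2⟩
    rcases exists_hasDerivAt_eq_slope (fun y => u y t) (fun c => pdx L u c t) hxy
      (hgc.mono hsub) hder with ⟨c, hc, hceq⟩
    have hcIcc : c ∈ Icc 0 L := hsub ⟨le_of_lt hc.1, le_of_lt hc.2⟩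
    have hpdxc : pdx L u c t ≤ 0 := by
      rw [hceq]
      apply div_nonpos_of_nonpos_of_nonneg
      · have := hmin y (hsub ⟨le_refl y, le_of_lt hxy⟩); linarith
      · linarith [hxy]
    refine ⟨c, hball ⟨?_, hcIcc, ?_⟩, ?_⟩
    · rw [Metric.mem_ball, Real.dist_eq, abs_lt]
      have h1' : y < c := hc.1
      have h2' : x - δ ≤ y := le_max_left _ _
      constructor <;> linarith [hc.2]
    · exact fun hcx => absurd (hcx : c = x) (ne_of_lt hc.2)
    · rw [slope_def_field, hhx]
      rw [div_nonneg_iff]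
      right
      constructor
      · simp only [sub_zero, hh]
        exact mul_nonpos_of_nonneg_of_nonpos (le_of_lt (hσpos _)) hpdxc
      · linarith [hc.2]

lemma mp_lower {L : ℝ} (hL : 0 < L) {f : ℝ → ℝ} (hf : ContDiff ℝ 2 f)
    (hσpos : ∀ s, 0 < deriv f s) {u : ℝ → ℝ → ℝ}
    (h1 : ∀ t ∈ Ici (0:ℝ), DifferentiableOn ℝ (fun y => u y t) (Icc 0 L))
    (h2 : ∀ t ∈ Ici (0:ℝ), DifferentiableOn ℝ (fun y => pdx L u y t) (Icc 0 L))
    (h3 : ∀ x ∈ Icc 0 L, DifferentiableOn ℝ (fun s => u x s) (Ici 0))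
    (h4 : ContinuousOn (fun p : ℝ × ℝ => u p.1 p.2) (Icc 0 L ×ˢ Ici 0))
    (h5 : ContinuousOn (fun p : ℝ × ℝ => pdx L u p.1 p.2) (Icc 0 L ×ˢ Ici 0))
    (h6 : ContinuousOn (fun p : ℝ × ℝ => pdxx L u p.1 p.2) (Icc 0 L ×ˢ Ici 0))
    (h7 : ContinuousOn (fun p : ℝ × ℝ => pdt (Ici 0) u p.1 p.2) (Icc 0 L ×ˢ Ici 0))
    (hpde : ∀ x ∈ Ioo 0 L, ∀ t ∈ Ioi (0:ℝ), pdt (Ici 0) u x t = fluxxx L f u x t)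
    (hbc : ∀ t ∈ Ioi (0:ℝ),
      deriv f (u 0 t) * pdx L u 0 t = 0 ∧ deriv f (u L t) * pdx L u L t = 0)
    {m : ℝ} (hm : ∀ x ∈ Icc 0 L, m ≤ u x 0) :
    ∀ x ∈ Icc 0 L, ∀ t, 0 ≤ t → m ≤ u x t := by
  have core : ∀ T > (0:ℝ), ∀ ε > (0:ℝ), ∀ x ∈ Icc 0 L, ∀ t ∈ Icc 0 T,
      m - ε * T ≤ u x t := by
    intro T hT ε hε
    set K : Set (ℝ × ℝ) := Icc 0 L ×ˢ Icc 0 T with hK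
    set w : ℝ × ℝ → ℝ := fun p => u p.1 p.2 + ε * p.2 with hw
    have hKsub : K ⊆ Icc 0 L ×ˢ Ici 0 := prod_mono_right (Icc_subset_Ici_self)
    have hKc : IsCompact K := isCompact_Icc.prod isCompact_Icc
    have hKne : K.Nonempty := ⟨(0, 0), ⟨le_refl 0, hL.le⟩, ⟨le_refl 0, hT.le⟩⟩
    have hwc : ContinuousOn w K :=
      (h4.mono hKsub).add ((continuous_const.mul continuous_snd).continuousOn)
    obtain ⟨p, hpK, hpmin⟩ := hKc.exists_isMinOn hKne hwc
    obtain ⟨hpx, hpt⟩ := hpK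
    have hminle : ∀ q ∈ K, w p ≤ w q := fun q hq => hpmin hq
    have hwpM : m ≤ w p := by
      by_contra hcon
      push_neg at hcon
      have htpos : 0 < p.2 := by
        rcases lt_or_eq_of_le hpt.1 with h | h
        · exact h
        · exfalso
          have : w p = u p.1 0 := by rw [hw]; simp [← h]
          rw [this] at hcon
          exact absurd (hm p.1 hpx) (not_le.mpr hcon)
      have htmem : p.2 ∈ Ici (0:ℝ) := hpt.1
      have hminx : ∀ y ∈ Icc 0 L, u p.1 p.2 ≤ u y p.2 := by
        intro y hy
        have := hminle (y, p.2) ⟨hy, hpt⟩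
        simp only [hw] at this
        linarith
      have hpdx0 : pdx L u p.1 p.2 = 0 := by
        rcases lt_or_eq_of_le hpx.1 with hx0 | hx0
        · rcases lt_or_eq_of_le hpx.2 with hxL | hxL
          · have hd : HasDerivAt (fun y => u y p.2) (pdx L u p.1 p.2) p.1 :=
              hasDerivAt_interior (h1 p.2 htmem) ⟨hx0, hxL⟩
            have hloc : IsLocalMin (fun y => u y p.2) p.1 :=
              Filter.eventually_of_mem (Icc_mem_nhds hx0 hxL) (fun y hy => hminx y hy)
            exact hloc.hasDerivAt_eq_zero hd
          · have hb := (hbc p.2 htpos).2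
            rw [hxL]
            rcases mul_eq_zero.mp hb with h | h
            · exact absurd h (ne_of_gt (hσpos _))
            · exact h
        · have hb := (hbc p.2 htpos).1
          rw [← hx0]
          rcases mul_eq_zero.mp hb with h | h
          · exact absurd h (ne_of_gt (hσpos _))
          · exact h
      have htime : pdt (Ici 0) u p.1 p.2 ≤ -ε := by
        have hmem : Ici (0:ℝ) ∈ 𝓝 p.2 := Ici_mem_nhds htpos
        have hdiff : DifferentiableAt ℝ (fun s => u p.1 s) p.2 :=
          (h3 p.1 hpx p.2 htpos.le).differentiableAt hmem
        have hd : HasDerivAt (fun s => u p.1 s) (pdt (Ici 0) u p.1 p.2) p.2 := by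
          rw [pdt, derivWithin_of_mem_nhds hmem]; exact hdiff.hasDerivAt
        have htend := hasDerivAt_iff_tendsto_slope.mp hd
        have hne : (𝓝[Ioo (0:ℝ) p.2] p.2).NeBot := by
          apply mem_closure_iff_nhdsWithin_neBot.mp
          rw [closure_Ioo (ne_of_lt htpos)]
          exact ⟨htpos.le, le_refl _⟩
        have htend' : Tendsto (slope (fun s => u p.1 s) p.2) (𝓝[Ioo (0:ℝ) p.2] p.2)
            (𝓝 (pdt (Ici 0) u p.1 p.2)) :=
          htend.mono_left (nhdsWithin_mono _ (fun s hs => ne_of_lt hs.2))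
        refine le_of_tendsto htend' ?_
        filter_upwards [self_mem_nhdsWithin] with s hs
        have hsK : (p.1, s) ∈ K := ⟨hpx, ⟨hs.1.le, hs.2.le.trans hpt.2⟩⟩
        have := hminle (p.1, s) hsK
        simp only [hw] at this
        rw [slope_def_field]
        have hst : s - p.2 < 0 := by linarith [hs.2]
        rw [div_le_iff_of_neg hst]
        nlinarith
      have hpdtq : pdt (Ici 0) u p.1 p.2 = qfun L f u p.1 p.2 := by
        have heq : EqOn (fun x => pdt (Ici 0) u x p.2) (fun x => qfun L f u x p.2)
            (Icc 0 L) := by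
          apply eqOn_Icc_of_eqOn_Ioo hL (contOn_slice_x h7 htmem)
            (contOn_qfun_slice hf h4 h5 h6 htmem)
          intro z hz
          have hz2 := hpde z hz p.2 htpos
          show pdt (Ici 0) u z p.2 = qfun L f u z p.2
          rw [hz2]
          exact fluxxx_eq_qfun hL hf (h1 p.2 htmem) (h2 p.2 htmem) (Ioo_subset_Icc_self hz)
        exact heq hpx
      have hqle : 0 ≤ qfun L f u p.1 p.2 := by
        have hfreq := freq_slope_nonneg hL hσpos htmem h1 h4 hpx hminx hpdx0
        have hder := flux_h_deriv hf (h1 p.2 htmem) (h2 p.2 htmem) hpx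
        have htend := hasDerivWithinAt_iff_tendsto_slope.mp hder
        exact isClosed_Ici.mem_of_frequently_of_tendsto hfreq htend
      rw [hpdtq] at htime
      linarith [hσpos 0]
    intro x hx t ht
    have hq := hminle (x, t) ⟨hx, ht⟩
    have h2' : ε * t ≤ ε * T := mul_le_mul_of_nonneg_left ht.2 hε.le
    simp only [hw] at hq hwpM
    linarith
  intro x hx t ht
  rcases eq_or_lt_of_le ht with h | h
  · rw [← h]; exact hm x hx
  · have hall : ∀ ε > (0:ℝ), m ≤ u x t + ε := by
      intro ε hε
      have := core t h (ε / t) (div_pos hε h) x hx t ⟨ht, le_refl t⟩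
      rw [div_mul_cancel₀ ε (ne_of_gt h)] at this
      linarith
    by_contra hcon
    push_neg at hcon
    have := hall ((m - u x t)/2) (by linarith)
    linarith
lemma cs_interval {a b : ℝ} (hab : a ≤ b) {g : ℝ → ℝ} (hg : ContinuousOn g (Icc a b)) :
    (∫ x in a..b, g x)^2 ≤ (b - a) * ∫ x in a..b, (g x)^2 := by
  rcases eq_or_lt_of_le hab with h | h
  · subst h; simp
  · have hg' : ContinuousOn g (uIcc a b) := by rwa [uIcc_of_le hab]
    have hgi : IntervalIntegrable g volume a b := hg'.intervalIntegrable
    have hgi2 : IntervalIntegrable (fun x => (g x)^2) volume a b :=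
      (hg'.pow 2).intervalIntegrable
    set I := ∫ x in a..b, g x with hI
    set J := ∫ x in a..b, (g x)^2 with hJ
    have hc : 0 < b - a := by linarith
    have key : 0 ≤ ∫ x in a..b, (g x - I/(b-a))^2 :=
      intervalIntegral.integral_nonneg hab (fun x _ => sq_nonneg _)
    have expand : ∫ x in a..b, (g x - I/(b-a))^2
        = J - 2*(I/(b-a))*I + (I/(b-a))^2*(b-a) := by
      have hptw : ∀ x, (g x - I/(b-a))^2
          = (g x)^2 - (2*(I/(b-a)))*g x + (I/(b-a))^2 := fun x => by ring
      simp_rw [hptw]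
      have h1 : IntervalIntegrable (fun x => 2*(I/(b-a))*g x) volume a b :=
        hgi.const_mul (2*(I/(b-a)))
      rw [intervalIntegral.integral_add (hgi2.sub h1) intervalIntegrable_const,
        intervalIntegral.integral_sub hgi2 h1,
        intervalIntegral.integral_const_mul, intervalIntegral.integral_const]
      simp only [smul_eq_mul]
      ring
    rw [expand] at key
    have hne : b - a ≠ 0 := ne_of_gt hc
    have heq : J - 2*(I/(b-a))*I + (I/(b-a))^2*(b-a) = J - I*I/(b-a) := by
      field_simp
      ring
    rw [heq] at key
    rw [sub_nonneg, div_le_iff₀ hc] at key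
    rw [sq]
    linarith

lemma exists_zero_of_integral_zero {L : ℝ} (hL : 0 < L) {v : ℝ → ℝ}
    (hv : ContinuousOn v (Icc 0 L)) (h0 : (∫ x in (0:ℝ)..L, v x) = 0) :
    ∃ x₀ ∈ Icc 0 L, v x₀ = 0 := by
  by_contra hcon
  push_neg at hcon
  have hv' : ContinuousOn v (uIcc 0 L) := by rwa [uIcc_of_le hL.le]
  have hvi : IntervalIntegrable v volume 0 L := hv'.intervalIntegrable
  have hivt : ∀ x ∈ Icc 0 L, ∀ y ∈ Icc 0 L, v x < 0 → 0 < v y → False := by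
    intro x hx y hy hvx hvy
    have hsub : uIcc x y ⊆ Icc 0 L := by
      rw [show Icc (0:ℝ) L = uIcc 0 L from (uIcc_of_le hL.le).symm]
      exact uIcc_subset_uIcc (by rwa [← uIcc_of_le hL.le] at hx)
        (by rwa [← uIcc_of_le hL.le] at hy)
    have h0mem : (0:ℝ) ∈ uIcc (v x) (v y) := by
      rw [mem_uIcc]
      left
      exact ⟨hvx.le, hvy.le⟩
    rcases intermediate_value_uIcc (hv.mono hsub) h0mem with ⟨c, hc, hvc⟩
    exact hcon c (hsub hc) hvc
  have hsign : (∀ x ∈ Icc 0 L, 0 < v x) ∨ (∀ x ∈ Icc 0 L, v x < 0) := by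
    rcases lt_or_gt_of_ne (hcon 0 ⟨le_refl 0, hL.le⟩) with h | h
    · right
      intro x hx
      rcases lt_or_gt_of_ne (hcon x hx) with h' | h'
      · exact h'
      · exact absurd (hivt 0 ⟨le_refl 0, hL.le⟩ x hx h h') (fun a => a)
    · left
      intro x hx
      rcases lt_or_gt_of_ne (hcon x hx) with h' | h'
      · exact absurd (hivt x hx 0 ⟨le_refl 0, hL.le⟩ h' h) (fun a => a)
      · exact h'
  rcases hsign with h | h
  · have := intervalIntegral.intervalIntegral_pos_of_pos_on hvi
      (fun x hx => h x ⟨hx.1.le, hx.2.le⟩) hL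
    rw [h0] at this
    exact lt_irrefl 0 this
  · have hpos := intervalIntegral.intervalIntegral_pos_of_pos_on hvi.neg
      (fun x hx => by simpa using (h x ⟨hx.1.le, hx.2.le⟩)) hL
    simp only [Pi.neg_apply] at hpos
    rw [intervalIntegral.integral_neg, h0, neg_zero] at hpos
    exact lt_irrefl 0 hpos

set_option maxHeartbeats 1000000 in
lemma poincare {L : ℝ} (hL : 0 < L) {v vx : ℝ → ℝ}
    (hv : ContinuousOn v (Icc 0 L))
    (hvd : ∀ x ∈ Ioo 0 L, HasDerivAt v (vx x) x)
    (hvx : ContinuousOn vx (Icc 0 L))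
    (hmean : (∫ x in (0:ℝ)..L, v x) = 0) :
    (∫ x in (0:ℝ)..L, (v x)^2) ≤ L^2 * ∫ x in (0:ℝ)..L, (vx x)^2 := by
  obtain ⟨x₀, hx₀, hvx₀⟩ := exists_zero_of_integral_zero hL hv hmean
  have hIccU : Icc (0:ℝ) L = uIcc 0 L := (uIcc_of_le hL.le).symm
  have hvxu : ContinuousOn vx (uIcc 0 L) := by rwa [uIcc_of_le hL.le]
  have hvx2i : IntervalIntegrable (fun y => (vx y)^2) volume 0 L :=
    (hvxu.pow 2).intervalIntegrable
  have hJnn : 0 ≤ᵐ[volume.restrict (Ioc 0 L)] (fun y => (vx y)^2) :=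
    Filter.Eventually.of_forall (fun y => sq_nonneg _)
  have key : ∀ x ∈ Icc 0 L, (v x)^2 ≤ L * ∫ y in (0:ℝ)..L, (vx y)^2 := by
    intro x hx
    have hsub : uIcc x₀ x ⊆ Icc 0 L := by
      rw [hIccU]
      exact uIcc_subset_uIcc (by rwa [← hIccU]) (by rwa [← hIccU])
    have hftc : (∫ y in x₀..x, vx y) = v x - v x₀ := by
      apply intervalIntegral.integral_eq_sub_of_hasDeriv_right (hv.mono hsub)
      · intro c hc
        have hcmem : c ∈ Ioo 0 L := by
          rcases le_total x₀ x with hc' | hc'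
          · rw [min_eq_left hc', max_eq_right hc'] at hc
            exact ⟨lt_of_le_of_lt hx₀.1 hc.1, lt_of_lt_of_le hc.2 hx.2⟩
          · rw [min_eq_right hc', max_eq_left hc'] at hc
            exact ⟨lt_of_le_of_lt hx.1 hc.1, lt_of_lt_of_le hc.2 hx₀.2⟩
        exact (hvd c hcmem).hasDerivWithinAt
      · exact (hvx.mono hsub).intervalIntegrable
    have hv2 : (v x)^2 = (∫ y in x₀..x, vx y)^2 := by rw [hftc, hvx₀, sub_zero]
    rw [hv2]
    rcases le_total x₀ x with hc | hc
    · have hCS := cs_interval hc (hvx.mono (Icc_subset_Icc hx₀.1 hx.2))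
      have hmono : (∫ y in x₀..x, (vx y)^2) ≤ ∫ y in (0:ℝ)..L, (vx y)^2 :=
        intervalIntegral.integral_mono_interval hx₀.1 hc hx.2 hJnn hvx2i
      have hle1 : x - x₀ ≤ L := by linarith [hx.2, hx₀.1]
      have hnn : 0 ≤ ∫ y in x₀..x, (vx y)^2 :=
        intervalIntegral.integral_nonneg hc (fun _ _ => sq_nonneg _)
      calc (∫ y in x₀..x, vx y)^2 ≤ (x - x₀) * ∫ y in x₀..x, (vx y)^2 := hCS
        _ ≤ L * ∫ y in (0:ℝ)..L, (vx y)^2 := by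
            apply mul_le_mul hle1 hmono hnn hL.le
    · have heq2 : (∫ y in x₀..x, vx y)^2 = (∫ y in x..x₀, vx y)^2 := by
        rw [intervalIntegral.integral_symm]
        ring
      rw [heq2]
      have hCS := cs_interval hc (hvx.mono (Icc_subset_Icc hx.1 hx₀.2))
      have hmono : (∫ y in x..x₀, (vx y)^2) ≤ ∫ y in (0:ℝ)..L, (vx y)^2 :=
        intervalIntegral.integral_mono_interval hx.1 hc hx₀.2 hJnn hvx2i
      have hle1 : x₀ - x ≤ L := by linarith [hx₀.2, hx.1]
      have hnn : 0 ≤ ∫ y in x..x₀, (vx y)^2 :=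
        intervalIntegral.integral_nonneg hc (fun _ _ => sq_nonneg _)
      calc (∫ y in x..x₀, vx y)^2 ≤ (x₀ - x) * ∫ y in x..x₀, (vx y)^2 := hCS
        _ ≤ L * ∫ y in (0:ℝ)..L, (vx y)^2 := by
            apply mul_le_mul hle1 hmono hnn hL.le
  have hvu : ContinuousOn v (uIcc 0 L) := by rwa [uIcc_of_le hL.le]
  have hv2i : IntervalIntegrable (fun x => (v x)^2) volume 0 L :=
    (hvu.pow 2).intervalIntegrable
  have hconst : (∫ x in (0:ℝ)..L, (v x)^2)
      ≤ ∫ _x in (0:ℝ)..L, (L * ∫ y in (0:ℝ)..L, (vx y)^2) :=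
    intervalIntegral.integral_mono_on hL.le hv2i intervalIntegrable_const key
  rw [intervalIntegral.integral_const, smul_eq_mul] at hconst
  have hring : (L - 0) * (L * ∫ y in (0:ℝ)..L, (vx y)^2)
      = L^2 * ∫ y in (0:ℝ)..L, (vx y)^2 := by ring
  linarith [hring ▸ hconst]
lemma pdt_eq_qfun {L : ℝ} (hL : 0 < L) {f : ℝ → ℝ} (hf : ContDiff ℝ 2 f) {u : ℝ → ℝ → ℝ}
    (h1 : ∀ t ∈ Ici (0:ℝ), DifferentiableOn ℝ (fun y => u y t) (Icc 0 L))
    (h2 : ∀ t ∈ Ici (0:ℝ), DifferentiableOn ℝ (fun y => pdx L u y t) (Icc 0 L))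
    (h4 : ContinuousOn (fun p : ℝ × ℝ => u p.1 p.2) (Icc 0 L ×ˢ Ici 0))
    (h5 : ContinuousOn (fun p : ℝ × ℝ => pdx L u p.1 p.2) (Icc 0 L ×ˢ Ici 0))
    (h6 : ContinuousOn (fun p : ℝ × ℝ => pdxx L u p.1 p.2) (Icc 0 L ×ˢ Ici 0))
    (h7 : ContinuousOn (fun p : ℝ × ℝ => pdt (Ici 0) u p.1 p.2) (Icc 0 L ×ˢ Ici 0))
    (hpde : ∀ x ∈ Ioo 0 L, ∀ t ∈ Ioi (0:ℝ), pdt (Ici 0) u x t = fluxxx L f u x t)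
    {t : ℝ} (ht : 0 < t) :
    ∀ x ∈ Icc 0 L, pdt (Ici 0) u x t = qfun L f u x t := by
  have htm : t ∈ Ici (0:ℝ) := ht.le
  intro x hx
  have heq : EqOn (fun x => pdt (Ici 0) u x t) (fun x => qfun L f u x t) (Icc 0 L) := by
    apply eqOn_Icc_of_eqOn_Ioo hL (contOn_slice_x h7 htm) (contOn_qfun_slice hf h4 h5 h6 htm)
    intro z hz
    show pdt (Ici 0) u z t = qfun L f u z t
    rw [hpde z hz t ht]
    exact fluxxx_eq_qfun hL hf (h1 t htm) (h2 t htm) (Ioo_subset_Icc_self hz)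
  exact heq hx

lemma ibp_energy {L : ℝ} (hL : 0 < L) {f : ℝ → ℝ} (hf : ContDiff ℝ 2 f) {u : ℝ → ℝ → ℝ}
    {t : ℝ} (htm : t ∈ Ici (0:ℝ))
    (hd1 : DifferentiableOn ℝ (fun y => u y t) (Icc 0 L))
    (hd2 : DifferentiableOn ℝ (fun y => pdx L u y t) (Icc 0 L))
    (hcu : ContinuousOn (fun x => u x t) (Icc 0 L))
    (hcx : ContinuousOn (fun x => pdx L u x t) (Icc 0 L))
    (hcq : ContinuousOn (fun x => qfun L f u x t) (Icc 0 L))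
    (hbc0 : deriv f (u 0 t) * pdx L u 0 t = 0)
    (hbcL : deriv f (u L t) * pdx L u L t = 0) (c : ℝ) :
    (∫ x in (0:ℝ)..L, (u x t - c) * qfun L f u x t)
      = - ∫ x in (0:ℝ)..L, deriv f (u x t) * (pdx L u x t)^2 := by
  have hσc : Continuous (deriv f) := hf.continuous_deriv (by norm_num)
  set G := fun x => (u x t - c) * (deriv f (u x t) * pdx L u x t) with hG
  have hGc : ContinuousOn G (Icc 0 L) :=
    (hcu.sub continuousOn_const).mul ((hσc.comp_continuousOn hcu).mul hcx)
  have hGd : ∀ x ∈ Ioo 0 L, HasDerivAt G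
      (pdx L u x t * (deriv f (u x t) * pdx L u x t) + (u x t - c) * qfun L f u x t) x := by
    intro x hx
    have hxI : x ∈ Icc 0 L := Ioo_subset_Icc_self hx
    have hu' : HasDerivAt (fun y => u y t - c) (pdx L u x t) x :=
      (hasDerivAt_interior hd1 hx).sub_const c
    have hh' : HasDerivAt (fun y => deriv f (u y t) * pdx L u y t) (qfun L f u x t) x :=
      (flux_h_deriv hf hd1 hd2 hxI).hasDerivAt (Icc_mem_nhds hx.1 hx.2)
    exact hu'.mul hh'
  have hAc : ContinuousOn (fun x => pdx L u x t * (deriv f (u x t) * pdx L u x t)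
      + (u x t - c) * qfun L f u x t) (Icc 0 L) :=
    (hcx.mul ((hσc.comp_continuousOn hcu).mul hcx)).add
      ((hcu.sub continuousOn_const).mul hcq)
  have hAc' : ContinuousOn (fun x => pdx L u x t * (deriv f (u x t) * pdx L u x t)
      + (u x t - c) * qfun L f u x t) (uIcc 0 L) := by rwa [uIcc_of_le hL.le]
  have hint := hAc'.intervalIntegrable (μ := volume)
  have hftc := intervalIntegral.integral_eq_sub_of_hasDeriv_right_of_le hL.le hGc
    (fun x hx => (hGd x hx).hasDerivWithinAt) hint
  have hG0 : G 0 = 0 := by rw [hG]; simp [hbc0]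
  have hGL : G L = 0 := by rw [hG]; simp [hbcL]
  rw [hG0, hGL, sub_zero] at hftc
  have hcu' : ContinuousOn (fun x => pdx L u x t * (deriv f (u x t) * pdx L u x t))
      (uIcc 0 L) := by
    rw [uIcc_of_le hL.le]; exact hcx.mul ((hσc.comp_continuousOn hcu).mul hcx)
  have hcv' : ContinuousOn (fun x => (u x t - c) * qfun L f u x t) (uIcc 0 L) := by
    rw [uIcc_of_le hL.le]; exact (hcu.sub continuousOn_const).mul hcq
  rw [intervalIntegral.integral_add hcu'.intervalIntegrable hcv'.intervalIntegrable] at hftc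
  have hre : (∫ x in (0:ℝ)..L, pdx L u x t * (deriv f (u x t) * pdx L u x t))
      = ∫ x in (0:ℝ)..L, deriv f (u x t) * (pdx L u x t)^2 := by
    apply intervalIntegral.integral_congr
    intro x _
    ring
  rw [hre] at hftc
  linarith

lemma ibp_mass {L : ℝ} (hL : 0 < L) {f : ℝ → ℝ} (hf : ContDiff ℝ 2 f) {u : ℝ → ℝ → ℝ}
    {t : ℝ}
    (hd1 : DifferentiableOn ℝ (fun y => u y t) (Icc 0 L))
    (hd2 : DifferentiableOn ℝ (fun y => pdx L u y t) (Icc 0 L))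
    (hcu : ContinuousOn (fun x => u x t) (Icc 0 L))
    (hcx : ContinuousOn (fun x => pdx L u x t) (Icc 0 L))
    (hcq : ContinuousOn (fun x => qfun L f u x t) (Icc 0 L))
    (hbc0 : deriv f (u 0 t) * pdx L u 0 t = 0)
    (hbcL : deriv f (u L t) * pdx L u L t = 0) :
    (∫ x in (0:ℝ)..L, qfun L f u x t) = 0 := by
  have hσc : Continuous (deriv f) := hf.continuous_deriv (by norm_num)
  have hhc : ContinuousOn (fun x => deriv f (u x t) * pdx L u x t) (Icc 0 L) :=
    (hσc.comp_continuousOn hcu).mul hcx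
  have hcq' : ContinuousOn (fun x => qfun L f u x t) (uIcc 0 L) := by
    rwa [uIcc_of_le hL.le]
  have hftc := intervalIntegral.integral_eq_sub_of_hasDeriv_right_of_le hL.le hhc
    (fun x hx => ((flux_h_deriv hf hd1 hd2 (Ioo_subset_Icc_self hx)).hasDerivAt
      (Icc_mem_nhds hx.1 hx.2)).hasDerivWithinAt) hcq'.intervalIntegrable
  rw [hbc0, hbcL] at hftc
  simpa using hftc

lemma hasDeriv_integral_slice {L : ℝ} (hL : 0 < L) {F F' : ℝ → ℝ → ℝ} {t₀ : ℝ} (ht₀ : 0 < t₀)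
    (hFc : ∀ t, 0 < t → ContinuousOn (fun x => F x t) (Icc 0 L))
    (hF'cont : ContinuousOn (fun p : ℝ × ℝ => F' p.1 p.2) (Icc 0 L ×ˢ Ici 0))
    (hderiv : ∀ x ∈ Icc 0 L, ∀ t, 0 < t → HasDerivAt (fun s => F x s) (F' x t) t) :
    HasDerivAt (fun t => ∫ x in (0:ℝ)..L, F x t) (∫ x in (0:ℝ)..L, F' x t₀) t₀ := by
  have hKc : IsCompact (Icc (0:ℝ) L ×ˢ Icc (t₀/2) (2*t₀)) := isCompact_Icc.prod isCompact_Icc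
  have hKsub : Icc (0:ℝ) L ×ˢ Icc (t₀/2) (2*t₀) ⊆ Icc 0 L ×ˢ Ici 0 := fun p hp =>
    ⟨hp.1, le_trans (by positivity) hp.2.1⟩
  obtain ⟨C, hC⟩ := hKc.exists_bound_of_continuousOn (hF'cont.mono hKsub)
  have hball : Metric.ball t₀ (t₀/2) ⊆ Icc (t₀/2) (2*t₀) := by
    intro s hs
    rw [Metric.mem_ball, Real.dist_eq, abs_lt] at hs
    constructor <;> linarith [hs.1, hs.2]
  have hIoc : uIoc (0:ℝ) L = Ioc 0 L := uIoc_of_le hL.le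
  have key := intervalIntegral.hasDerivAt_integral_of_dominated_loc_of_deriv_le
    (𝕜 := ℝ) (μ := volume) (F := fun t x => F x t) (F' := fun t x => F' x t) (x₀ := t₀)
    (a := 0) (b := L) (bound := fun _ => C) (s := Metric.ball t₀ (t₀/2))
    (Metric.ball_mem_nhds _ (half_pos ht₀)) ?_ ?_ ?_ ?_ ?_ ?_
  · exact key.2
  · filter_upwards [eventually_gt_nhds ht₀] with t ht
    rw [hIoc]
    exact ((hFc t ht).mono Ioc_subset_Icc_self).aestronglyMeasurable measurableSet_Ioc
  · have := hFc t₀ ht₀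
    have : ContinuousOn (fun x => F x t₀) (uIcc 0 L) := by rwa [uIcc_of_le hL.le]
    exact this.intervalIntegrable
  · rw [hIoc]
    exact ((contOn_slice_x hF'cont (show t₀ ∈ Ici (0:ℝ) from ht₀.le)).mono
      Ioc_subset_Icc_self).aestronglyMeasurable measurableSet_Ioc
  · apply ae_of_all
    intro x hx t ht
    rw [hIoc] at hx
    exact hC (x, t) ⟨Ioc_subset_Icc_self hx, hball ht⟩
  · exact intervalIntegrable_const
  · apply ae_of_all
    intro x hx t ht
    rw [hIoc] at hx
    have htpos : 0 < t := by
      have := hball ht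
      have h2 : t₀/2 ≤ t := this.1
      linarith
    exact hderiv x (Ioc_subset_Icc_self hx) t htpos

lemma contWithinAt_integral_slice {L : ℝ} (hL : 0 < L) {F : ℝ → ℝ → ℝ}
    (hFc : ContinuousOn (fun p : ℝ × ℝ => F p.1 p.2) (Icc 0 L ×ˢ Ici 0)) :
    ContinuousWithinAt (fun t => ∫ x in (0:ℝ)..L, F x t) (Ici 0) 0 := by
  have hIoc : uIoc (0:ℝ) L = Ioc 0 L := uIoc_of_le hL.le
  obtain ⟨C, hC⟩ := (isCompact_Icc.prod isCompact_Icc :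
      IsCompact (Icc (0:ℝ) L ×ˢ Icc (0:ℝ) 1)).exists_bound_of_continuousOn
    (hFc.mono (prod_mono_right Icc_subset_Ici_self))
  apply intervalIntegral.continuousWithinAt_of_dominated_interval
    (bound := fun _ => C)
  · filter_upwards [self_mem_nhdsWithin] with t ht
    rw [hIoc]
    exact ((contOn_slice_x hFc ht).mono Ioc_subset_Icc_self).aestronglyMeasurable
      measurableSet_Ioc
  · have hmem : Ici (0:ℝ) ∩ Metric.ball 0 1 ∈ 𝓝[Ici (0:ℝ)] 0 :=
      inter_mem self_mem_nhdsWithin (nhdsWithin_le_nhds (Metric.ball_mem_nhds _ one_pos))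
    filter_upwards [hmem] with t ht
    apply ae_of_all
    intro x hx
    rw [hIoc] at hx
    have htI : t ∈ Icc (0:ℝ) 1 := by
      have h2 := ht.2
      rw [Metric.mem_ball, Real.dist_eq, sub_zero, abs_lt] at h2
      exact ⟨ht.1, h2.2.le⟩
    exact hC (x, t) ⟨Ioc_subset_Icc_self hx, htI⟩
  · exact intervalIntegrable_const
  · apply ae_of_all
    intro x hx
    rw [hIoc] at hx
    exact contOn_slice_t hFc (Ioc_subset_Icc_self hx) 0 (mem_Ici.mpr le_rfl)
set_option maxHeartbeats 1000000 in
lemma energy_decay {L : ℝ} (hL : 0 < L) {f : ℝ → ℝ} (hf : ContDiff ℝ 2 f)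
    {u : ℝ → ℝ → ℝ}
    (h1 : ∀ t ∈ Ici (0:ℝ), DifferentiableOn ℝ (fun y => u y t) (Icc 0 L))
    (h2 : ∀ t ∈ Ici (0:ℝ), DifferentiableOn ℝ (fun y => pdx L u y t) (Icc 0 L))
    (h3 : ∀ x ∈ Icc 0 L, DifferentiableOn ℝ (fun s => u x s) (Ici 0))
    (h4 : ContinuousOn (fun p : ℝ × ℝ => u p.1 p.2) (Icc 0 L ×ˢ Ici 0))
    (h5 : ContinuousOn (fun p : ℝ × ℝ => pdx L u p.1 p.2) (Icc 0 L ×ˢ Ici 0))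
    (h6 : ContinuousOn (fun p : ℝ × ℝ => pdxx L u p.1 p.2) (Icc 0 L ×ˢ Ici 0))
    (h7 : ContinuousOn (fun p : ℝ × ℝ => pdt (Ici 0) u p.1 p.2) (Icc 0 L ×ˢ Ici 0))
    (hpde : ∀ x ∈ Ioo 0 L, ∀ t ∈ Ioi (0:ℝ), pdt (Ici 0) u x t = fluxxx L f u x t)
    (hbc : ∀ t ∈ Ioi (0:ℝ),
      deriv f (u 0 t) * pdx L u 0 t = 0 ∧ deriv f (u L t) * pdx L u L t = 0)
    {s₀ c : ℝ} (hs₀nn : 0 ≤ s₀)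
    (hσlb : ∀ x ∈ Icc 0 L, ∀ t, 0 ≤ t → s₀ ≤ deriv f (u x t))
    (hM0 : (∫ x in (0:ℝ)..L, u x 0) = L * c) :
    ∀ t, 0 < t → (∫ x in (0:ℝ)..L, (u x t - c)^2)
      ≤ (∫ x in (0:ℝ)..L, (u x 0 - c)^2) * Real.exp (-(2*s₀/L^2*t)) := by
  have hσc : Continuous (deriv f) := hf.continuous_deriv (by norm_num)
  have hIcU : Icc (0:ℝ) L = uIcc 0 L := (uIcc_of_le hL.le).symm
  -- time derivative of u
  have hut : ∀ x ∈ Icc 0 L, ∀ t, 0 < t →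
      HasDerivAt (fun s => u x s) (pdt (Ici 0) u x t) t := by
    intro x hx t ht
    have hmem : Ici (0:ℝ) ∈ 𝓝 t := Ici_mem_nhds ht
    have hdiff : DifferentiableAt ℝ (fun s => u x s) t :=
      (h3 x hx t ht.le).differentiableAt hmem
    rw [pdt, derivWithin_of_mem_nhds hmem]
    exact hdiff.hasDerivAt
  -- slice continuity helpers
  have hcu : ∀ t, 0 ≤ t → ContinuousOn (fun x => u x t) (Icc 0 L) :=
    fun t ht => contOn_slice_x h4 ht
  have hcx : ∀ t, 0 ≤ t → ContinuousOn (fun x => pdx L u x t) (Icc 0 L) :=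
    fun t ht => contOn_slice_x h5 ht
  have hct : ∀ t, 0 ≤ t → ContinuousOn (fun x => pdt (Ici 0) u x t) (Icc 0 L) :=
    fun t ht => contOn_slice_x h7 ht
  have hcq : ∀ t, 0 ≤ t → ContinuousOn (fun x => qfun L f u x t) (Icc 0 L) :=
    fun t ht => contOn_qfun_slice hf h4 h5 h6 ht
  -- mass conservation
  set Mf : ℝ → ℝ := fun t => ∫ x in (0:ℝ)..L, u x t with hMf
  have hMd0 : ∀ t, 0 < t → HasDerivAt Mf 0 t := by
    intro t ht
    have hd := hasDeriv_integral_slice hL ht (fun s hs => hcu s hs.le) h7 hut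
    have hz : (∫ x in (0:ℝ)..L, pdt (Ici 0) u x t) = 0 := by
      have hcongr : (∫ x in (0:ℝ)..L, pdt (Ici 0) u x t)
          = ∫ x in (0:ℝ)..L, qfun L f u x t := by
        apply intervalIntegral.integral_congr
        rw [← hIcU]
        exact fun x hx => pdt_eq_qfun hL hf h1 h2 h4 h5 h6 h7 hpde ht x hx
      rw [hcongr]
      exact ibp_mass hL hf (h1 t ht.le) (h2 t ht.le) (hcu t ht.le) (hcx t ht.le)
        (hcq t ht.le) (hbc t ht).1 (hbc t ht).2
    rwa [hz] at hd
  have hMc0 : ContinuousWithinAt Mf (Ici 0) 0 := contWithinAt_integral_slice hL h4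
  have hMconst : ∀ t, 0 < t → Mf t = Mf 0 := by
    intro t ht
    have hcont : ContinuousOn Mf (Icc 0 t) := by
      intro s hs
      rcases eq_or_lt_of_le hs.1 with h | h
      · rw [← h]
        exact hMc0.mono (fun y hy => hy.1)
      · exact ((hMd0 s h).continuousAt).continuousWithinAt
    have hdiff : DifferentiableOn ℝ Mf (interior (Icc 0 t)) := by
      rw [interior_Icc]
      exact fun s hs => ((hMd0 s hs.1).differentiableAt).differentiableWithinAt
    have hanti : AntitoneOn Mf (Icc 0 t) := by
      apply antitoneOn_of_deriv_nonpos (convex_Icc 0 t) hcont hdiff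
      intro s hs
      rw [interior_Icc] at hs
      rw [(hMd0 s hs.1).deriv]
    have hmono : MonotoneOn Mf (Icc 0 t) := by
      apply monotoneOn_of_deriv_nonneg (convex_Icc 0 t) hcont hdiff
      intro s hs
      rw [interior_Icc] at hs
      rw [(hMd0 s hs.1).deriv]
    exact le_antisymm (hanti ⟨le_refl 0, ht.le⟩ ⟨ht.le, le_refl t⟩ ht.le)
      (hmono ⟨le_refl 0, ht.le⟩ ⟨ht.le, le_refl t⟩ ht.le)
  -- mean-zero at each time
  have hmean : ∀ t, 0 < t → (∫ x in (0:ℝ)..L, (u x t - c)) = 0 := by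
    intro t ht
    have hcu' : ContinuousOn (fun x => u x t) (uIcc 0 L) := by
      rw [← hIcU]; exact hcu t ht.le
    rw [intervalIntegral.integral_sub hcu'.intervalIntegrable intervalIntegrable_const,
      intervalIntegral.integral_const, smul_eq_mul]
    have : (∫ x in (0:ℝ)..L, u x t) = Mf t := rfl
    rw [this, hMconst t ht]
    have : Mf 0 = L * c := hM0
    rw [this]
    ring
  -- energy and its derivative
  set E : ℝ → ℝ := fun t => ∫ x in (0:ℝ)..L, (u x t - c)^2 with hE
  set D : ℝ → ℝ := fun t => ∫ x in (0:ℝ)..L, 2*((u x t - c) * pdt (Ici 0) u x t) with hD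
  have hEd : ∀ t, 0 < t → HasDerivAt E (D t) t := by
    intro t ht
    apply hasDeriv_integral_slice hL ht
    · exact fun s hs => ((hcu s hs.le).sub continuousOn_const).pow 2
    · exact continuousOn_const.mul ((h4.sub continuousOn_const).mul h7)
    · intro x hx s hs
      have h := ((hut x hx s hs).sub_const c).fun_pow 2
      refine h.congr_deriv ?_
      push_cast
      ring
  -- derivative bound
  set k : ℝ := 2*s₀/L^2 with hk
  have hknn : 0 ≤ k := by positivity
  have hDle : ∀ t, 0 < t → D t ≤ -(k * E t) := by
    intro t ht
    have hDq : D t = 2 * ∫ x in (0:ℝ)..L, (u x t - c) * qfun L f u x t := by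
      rw [hD]
      simp only []
      rw [← intervalIntegral.integral_const_mul]
      apply intervalIntegral.integral_congr
      rw [← hIcU]
      intro x hx
      simp only []
      rw [pdt_eq_qfun hL hf h1 h2 h4 h5 h6 h7 hpde ht x hx]
    have hibp := ibp_energy hL hf (show t ∈ Ici (0:ℝ) from ht.le) (h1 t ht.le) (h2 t ht.le)
      (hcu t ht.le) (hcx t ht.le) (hcq t ht.le) (hbc t ht).1 (hbc t ht).2 c
    rw [hibp] at hDq
    -- D t = -2 ∫ σ(u) pdx²
    have hσint : (∫ x in (0:ℝ)..L, s₀ * (pdx L u x t)^2)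
        ≤ ∫ x in (0:ℝ)..L, deriv f (u x t) * (pdx L u x t)^2 := by
      apply intervalIntegral.integral_mono_on hL.le
      · have : ContinuousOn (fun x => s₀ * (pdx L u x t)^2) (uIcc 0 L) := by
          rw [← hIcU]; exact continuousOn_const.mul ((hcx t ht.le).pow 2)
        exact this.intervalIntegrable
      · have : ContinuousOn (fun x => deriv f (u x t) * (pdx L u x t)^2) (uIcc 0 L) := by
          rw [← hIcU]
          exact (hσc.comp_continuousOn (hcu t ht.le)).mul ((hcx t ht.le).pow 2)
        exact this.intervalIntegrable
      · intro x hx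
        exact mul_le_mul_of_nonneg_right (hσlb x hx t ht.le) (sq_nonneg _)
    rw [intervalIntegral.integral_const_mul] at hσint
    -- Poincaré
    have hpoin : E t ≤ L^2 * ∫ x in (0:ℝ)..L, (pdx L u x t)^2 := by
      apply poincare hL ((hcu t ht.le).sub continuousOn_const)
        (fun x hx => (hasDerivAt_interior (h1 t ht.le) hx).sub_const c)
        (hcx t ht.le) (hmean t ht)
    have hL2 : (0:ℝ) < L^2 := by positivity
    have hkE : k * E t ≤ 2 * (s₀ * ∫ x in (0:ℝ)..L, (pdx L u x t)^2) := by
      rw [hk]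
      rw [div_mul_eq_mul_div, div_le_iff₀ hL2]
      calc 2*s₀ * E t ≤ 2*s₀ * (L^2 * ∫ x in (0:ℝ)..L, (pdx L u x t)^2) := by
            apply mul_le_mul_of_nonneg_left hpoin (by positivity)
        _ = 2 * (s₀ * ∫ x in (0:ℝ)..L, (pdx L u x t)^2) * L^2 := by ring
    rw [hDq]
    linarith
  -- Gronwall
  intro T hT
  set Ff : ℝ → ℝ := fun t => E t * Real.exp (k*t) with hFf
  have hFd : ∀ t, 0 < t → HasDerivAt Ff (D t * Real.exp (k*t) + E t * (Real.exp (k*t) * k)) t := by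
    intro t ht
    have h := (hEd t ht).mul (((hasDerivAt_id t).const_mul k).exp)
    simp at h; exact h
  have hFd0 : ∀ t, 0 < t → deriv Ff t ≤ 0 := by
    intro t ht
    rw [(hFd t ht).deriv]
    have h1' := hDle t ht
    have h2' : 0 < Real.exp (k*t) := Real.exp_pos _
    calc D t * Real.exp (k*t) + E t * (Real.exp (k*t) * k)
        ≤ -(k * E t) * Real.exp (k*t) + E t * (Real.exp (k*t) * k) := by
          apply add_le_add_left (mul_le_mul_of_nonneg_right h1' h2'.le)
      _ = 0 := by ring
  have hEc0 : ContinuousWithinAt E (Ici 0) 0 := by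
    apply contWithinAt_integral_slice hL
    exact (h4.sub continuousOn_const).pow 2
  have hFc0 : ContinuousWithinAt Ff (Ici 0) 0 := by
    apply hEc0.mul
    exact ((Real.continuous_exp.comp (continuous_const.mul continuous_id)).continuousAt).continuousWithinAt
  have hFcont : ContinuousOn Ff (Icc 0 T) := by
    intro s hs
    rcases eq_or_lt_of_le hs.1 with h | h
    · rw [← h]
      exact hFc0.mono (fun y hy => hy.1)
    · exact ((hFd s h).continuousAt).continuousWithinAt
  have hFdiff : DifferentiableOn ℝ Ff (interior (Icc 0 T)) := by
    rw [interior_Icc]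
    exact fun s hs => ((hFd s hs.1).differentiableAt).differentiableWithinAt
  have hanti : AntitoneOn Ff (Icc 0 T) := by
    apply antitoneOn_of_deriv_nonpos (convex_Icc 0 T) hFcont hFdiff
    intro s hs
    rw [interior_Icc] at hs
    exact hFd0 s hs.1
  have hkey : Ff T ≤ Ff 0 :=
    hanti ⟨le_refl 0, hT.le⟩ ⟨hT.le, le_refl T⟩ hT.le
  have hF0 : Ff 0 = E 0 := by
    rw [hFf]
    simp
  rw [hF0, hFf] at hkey
  simp only [] at hkey
  show E T ≤ E 0 * Real.exp (-(k*T))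
  rw [Real.exp_neg, ← div_eq_mul_inv]
  exact (le_div_iff₀ (Real.exp_pos (k*T))).mpr hkey

/-- exponential `L²` decay estimate from the proof of Lemma 2.1(iii). -/
theorem lemma_classical_L2_decay
    (L : ℝ) (hL : 0 < L)
    (f : ℝ → ℝ) (hf : ContDiff ℝ 2 f) (hσ : ∀ s : ℝ, 0 < deriv f s)
    (u₀ : ℝ → ℝ) (hu₀reg : ContDiffOn ℝ 2 u₀ (Set.Icc 0 L))
    (hcompat : deriv f (u₀ 0) * derivWithin u₀ (Set.Icc 0 L) 0 = 0 ∧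
               deriv f (u₀ L) * derivWithin u₀ (Set.Icc 0 L) L = 0)
    (u : ℝ → ℝ → ℝ) (hu : IsC21On L (Set.Ici 0) u)
    (husol : IsClassicalSolGen L f (deriv f) u₀ u)
    (m₀ M₀ ubar s₀ : ℝ)
    (hm₀ : m₀ = sInf (u₀ '' Set.Icc 0 L)) (hM₀ : M₀ = sSup (u₀ '' Set.Icc 0 L))
    (hubar : ubar = (∫ x in Set.Ioo (0:ℝ) L, u₀ x) / L)
    (hs₀ : s₀ = sInf (deriv f '' Set.Icc m₀ M₀)) :
    0 < s₀ ∧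
    ∃ C : ℝ, 0 < C ∧ ∀ t > (0:ℝ),
      Real.sqrt (∫ x in Set.Ioo (0:ℝ) L, (u x t - ubar) ^ 2)
        ≤ Real.sqrt (∫ x in Set.Ioo (0:ℝ) L, (u₀ x - ubar) ^ 2)
            * Real.exp (-(s₀ * C * t)) := by
  obtain ⟨h1, h2, h3, h4, h5, h6, h7⟩ := hu
  obtain ⟨hpde, hinit, hbc⟩ := husol
  have hσc : Continuous (deriv f) := hf.continuous_deriv (by norm_num)
  have hu₀c : ContinuousOn u₀ (Icc 0 L) := hu₀reg.continuousOn
  have hIccne : (Icc (0:ℝ) L).Nonempty := nonempty_Icc.mpr hL.le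
  have himgc : IsCompact (u₀ '' Icc 0 L) := isCompact_Icc.image_of_continuousOn hu₀c
  have himgne : (u₀ '' Icc 0 L).Nonempty := hIccne.image u₀
  have hm₀M₀ : m₀ ≤ M₀ := by
    rw [hm₀, hM₀]
    exact csInf_le_csSup himgne himgc.bddBelow himgc.bddAbove
  have hu₀mem : ∀ x ∈ Icc 0 L, u₀ x ∈ Icc m₀ M₀ := by
    intro x hx
    exact ⟨hm₀ ▸ csInf_le himgc.bddBelow (mem_image_of_mem u₀ hx),
      hM₀ ▸ le_csSup himgc.bddAbove (mem_image_of_mem u₀ hx)⟩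
  have hSc : IsCompact (deriv f '' Icc m₀ M₀) :=
    isCompact_Icc.image_of_continuousOn hσc.continuousOn
  have hSne : (deriv f '' Icc m₀ M₀).Nonempty :=
    (nonempty_Icc.mpr hm₀M₀).image _
  have hs₀mem : s₀ ∈ deriv f '' Icc m₀ M₀ := hs₀ ▸ hSc.sInf_mem hSne
  obtain ⟨y₀, _, hy₀eq⟩ := hs₀mem
  have hs₀pos : 0 < s₀ := hy₀eq ▸ hσ y₀
  have hs₀le : ∀ y ∈ Icc m₀ M₀, s₀ ≤ deriv f y := fun y hy =>
    hs₀ ▸ csInf_le hSc.bddBelow (mem_image_of_mem _ hy)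
  -- initial slice
  have hinit' : ∀ x ∈ Icc 0 L, u x 0 = u₀ x :=
    eqOn_Icc_of_eqOn_Ioo hL (contOn_slice_x h4 (mem_Ici.mpr (le_refl 0))) hu₀c
      (fun z hz => hinit z hz)
  have hub : ∀ x ∈ Icc 0 L, u x 0 ≤ M₀ := fun x hx =>
    (hinit' x hx) ▸ (hu₀mem x hx).2
  have hlb : ∀ x ∈ Icc 0 L, m₀ ≤ u x 0 := fun x hx =>
    (hinit' x hx) ▸ (hu₀mem x hx).1
  have hup := mp_upper hL hf hσ h1 h2 h3 h4 h5 h6 h7 hpde hbc hub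
  have hlo := mp_lower hL hf hσ h1 h2 h3 h4 h5 h6 h7 hpde hbc hlb
  have hσlb : ∀ x ∈ Icc 0 L, ∀ t, 0 ≤ t → s₀ ≤ deriv f (u x t) := fun x hx t ht =>
    hs₀le _ ⟨hlo x hx t ht, hup x hx t ht⟩
  -- Ioo/interval integral conversion
  have hconv : ∀ g : ℝ → ℝ, (∫ x in Ioo (0:ℝ) L, g x) = ∫ x in (0:ℝ)..L, g x := by
    intro g
    rw [intervalIntegral.integral_of_le hL.le, integral_Ioc_eq_integral_Ioo]
  -- mass at time 0
  have hM0 : (∫ x in (0:ℝ)..L, u x 0) = L * ubar := by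
    have hcongr : (∫ x in (0:ℝ)..L, u x 0) = ∫ x in (0:ℝ)..L, u₀ x := by
      apply intervalIntegral.integral_congr
      rw [uIcc_of_le hL.le]
      exact fun x hx => hinit' x hx
    rw [hcongr, ← hconv u₀, hubar]
    field_simp
  have hdecay := energy_decay hL hf h1 h2 h3 h4 h5 h6 h7 hpde hbc hs₀pos.le hσlb hM0
  refine ⟨hs₀pos, 1/L^2, by positivity, ?_⟩
  intro t ht
  have hdec := hdecay t ht
  have hE0eq : (∫ x in (0:ℝ)..L, (u x 0 - ubar)^2) = ∫ x in (0:ℝ)..L, (u₀ x - ubar)^2 := by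
    apply intervalIntegral.integral_congr
    rw [uIcc_of_le hL.le]
    intro x hx
    simp only []
    rw [hinit' x hx]
  rw [hE0eq] at hdec
  rw [hconv, hconv]
  have hE0nn : 0 ≤ ∫ x in (0:ℝ)..L, (u₀ x - ubar)^2 :=
    intervalIntegral.integral_nonneg hL.le (fun x _ => sq_nonneg _)
  have hsq := Real.sqrt_le_sqrt hdec
  rw [Real.sqrt_mul hE0nn] at hsq
  have hexp : Real.sqrt (Real.exp (-(2*s₀/L^2*t))) = Real.exp (-(s₀ * (1/L^2) * t)) := by
    have : Real.exp (-(2*s₀/L^2*t)) = (Real.exp (-(s₀ * (1/L^2) * t)))^2 := by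
      rw [← Real.exp_nat_mul]
      congr 1
      push_cast
      ring
    rw [this, Real.sqrt_sq (Real.exp_nonneg _)]
  rw [hexp] at hsq
  exact hsq
end helpers
end

section
/- Let 2/3 < β ≤ 1 and 3β/4 < α < 1/(4−3β), and set s₀₋ = (2α−√(4α²−3αβ))/(3αβ). Then ρ(s₀₋) ≤ ρ(1) if 3β/4 < α ≤ −4β/(3β²−4β−4), and ρ(s₀₋) > ρ(1) if −4β/(3β²−4β−4) < α < 1/(4−3β). -/
open MeasureTheory Set

set_option maxHeartbeats 1000000

/-- type (I) versus type (II) dichotomy for `ρ(s₀₋)` against `ρ(1)`. -/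
theorem type_I_II_dichotomy
    (α β : ℝ) (hb1 : 2 / 3 < β) (hb2 : β ≤ 1)
    (hA1 : 3 * β / 4 < α) (hA2 : α < 1 / (4 - 3 * β)) :
    (α ≤ -(4 * β) / (3 * β ^ 2 - 4 * β - 4) → rho α β (s0m α β) ≤ rho α β 1) ∧
    (-(4 * β) / (3 * β ^ 2 - 4 * β - 4) < α → rho α β 1 < rho α β (s0m α β)) := by
  have hb0 : (0:ℝ) < β := by linarith
  have ha0 : (0:ℝ) < α := by nlinarith
  have h43 : 3 * β < 4 * α := by linarith
  have hE0 : (0:ℝ) < 4 + 4 * β - 3 * β ^ 2 := by nlinarith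
  have h4m3b : (0:ℝ) < 4 - 3 * β := by linarith
  have hG : (4 - 3 * β) * α < 1 := by
    rw [lt_div_iff₀ h4m3b] at hA2; linarith
  have hthr : -(4 * β) / (3 * β ^ 2 - 4 * β - 4) = 4 * β / (4 + 4 * β - 3 * β ^ 2) := by
    rw [show (3 * β ^ 2 - 4 * β - 4 : ℝ) = -(4 + 4 * β - 3 * β ^ 2) by ring, div_neg,
      neg_div, neg_neg]
  set r := Real.sqrt (4 * α ^ 2 - 3 * α * β) with hrdef
  have hDpos : 0 < 4 * α ^ 2 - 3 * α * β := by nlinarith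
  have hr2 : r ^ 2 = 4 * α ^ 2 - 3 * α * β := Real.sq_sqrt hDpos.le
  have hr0 : 0 < r := Real.sqrt_pos.mpr hDpos
  have key : rho α β (s0m α β) * (27 * α ^ 2 * β ^ 2)
      = 2 * α * ((2 * α - r) * (3 * β - 2 * α + r)) := by
    unfold rho s0m
    rw [← hrdef]
    field_simp
    linear_combination (27 * (2 * α - r)) * hr2
  have hrho1 : rho α β 1 = α * β - 2 * α + 1 := by unfold rho; ring
  have h27 : (0:ℝ) < 27 * α ^ 2 * β ^ 2 := by positivity
  have hid : (27 * α ^ 2 * β ^ 3 - 54 * α ^ 2 * β ^ 2 + 27 * α * β ^ 2 - 18 * α * β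
        + 16 * α ^ 2) ^ 2 - (2 * (4 * α - 3 * β) * r) ^ 2
      = 27 * β ^ 2 * α * (4 * β - α * (4 + 4 * β - 3 * β ^ 2))
        * ((4 - 3 * β) * α - 1) ^ 2 := by
    linear_combination (-4 * (4 * α - 3 * β) ^ 2) * hr2
  have heq : rho α β 1 * (27 * α ^ 2 * β ^ 2) - 2 * α * ((2 * α - r) * (3 * β - 2 * α + r))
      = α * ((27 * α ^ 2 * β ^ 3 - 54 * α ^ 2 * β ^ 2 + 27 * α * β ^ 2 - 18 * α * β
          + 16 * α ^ 2) - 2 * (4 * α - 3 * β) * r) := by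
    rw [hrho1]; linear_combination (2 * α) * hr2
  have hQpos : 0 < 2 * (4 * α - 3 * β) * r := by
    apply mul_pos (by linarith) hr0
  constructor
  · intro hle
    rw [hthr, le_div_iff₀ hE0] at hle
    have hPnn : 0 ≤ 27 * α ^ 2 * β ^ 3 - 54 * α ^ 2 * β ^ 2 + 27 * α * β ^ 2 - 18 * α * β
        + 16 * α ^ 2 := by
      rcases le_or_gt 0 (16 + 27 * β ^ 3 - 54 * β ^ 2) with hC | hC
      · nlinarith [mul_nonneg ha0.le (mul_nonneg hb0.le (by linarith : (0:ℝ) ≤ 3 * β - 2)),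
          mul_nonneg (mul_pos ha0 ha0).le hC]
      · have h1 : 0 ≤ α * (-(16 + 27 * β ^ 3 - 54 * β ^ 2))
            * (4 * β - α * (4 + 4 * β - 3 * β ^ 2)) :=
          mul_nonneg (mul_nonneg ha0.le (by linarith)) (by linarith)
        have h2 : 0 ≤ α * β * (3 * β - 2) ^ 3 :=
          mul_nonneg (mul_nonneg ha0.le hb0.le) (pow_nonneg (by linarith) 3)
        have hidP : (4 + 4 * β - 3 * β ^ 2) * (27 * α ^ 2 * β ^ 3 - 54 * α ^ 2 * β ^ 2
              + 27 * α * β ^ 2 - 18 * α * β + 16 * α ^ 2)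
            = α * β * (3 * β - 2) ^ 3 + α * (-(16 + 27 * β ^ 3 - 54 * β ^ 2))
              * (4 * β - α * (4 + 4 * β - 3 * β ^ 2)) := by ring
        nlinarith [h1, h2, hidP, hE0]
    have hPQ2 : (2 * (4 * α - 3 * β) * r) ^ 2
        ≤ (27 * α ^ 2 * β ^ 3 - 54 * α ^ 2 * β ^ 2 + 27 * α * β ^ 2 - 18 * α * β
          + 16 * α ^ 2) ^ 2 := by
      have h1 : 0 ≤ 27 * β ^ 2 * α * (4 * β - α * (4 + 4 * β - 3 * β ^ 2))
          * ((4 - 3 * β) * α - 1) ^ 2 :=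
        mul_nonneg (mul_nonneg (by positivity) (by linarith)) (sq_nonneg _)
      linarith [hid]
    have hPgeQ : 2 * (4 * α - 3 * β) * r
        ≤ 27 * α ^ 2 * β ^ 3 - 54 * α ^ 2 * β ^ 2 + 27 * α * β ^ 2 - 18 * α * β
          + 16 * α ^ 2 :=
      (pow_le_pow_iff_left₀ hQpos.le hPnn two_ne_zero).mp hPQ2
    have hmul : rho α β (s0m α β) * (27 * α ^ 2 * β ^ 2)
        ≤ rho α β 1 * (27 * α ^ 2 * β ^ 2) := by
      have h1 : 0 ≤ α * ((27 * α ^ 2 * β ^ 3 - 54 * α ^ 2 * β ^ 2 + 27 * α * β ^ 2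
          - 18 * α * β + 16 * α ^ 2) - 2 * (4 * α - 3 * β) * r) :=
        mul_nonneg ha0.le (by linarith)
      linarith [key, heq]
    exact le_of_mul_le_mul_right hmul h27
  · intro hgt
    rw [hthr, div_lt_iff₀ hE0] at hgt
    have hGsq : 0 < ((4 - 3 * β) * α - 1) ^ 2 := by nlinarith [hG]
    have hQP2 : (27 * α ^ 2 * β ^ 3 - 54 * α ^ 2 * β ^ 2 + 27 * α * β ^ 2 - 18 * α * β
          + 16 * α ^ 2) ^ 2 < (2 * (4 * α - 3 * β) * r) ^ 2 := by
      have h1 : 0 < 27 * β ^ 2 * α * (α * (4 + 4 * β - 3 * β ^ 2) - 4 * β)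
          * ((4 - 3 * β) * α - 1) ^ 2 :=
        mul_pos (mul_pos (by positivity) (by linarith)) hGsq
      nlinarith [hid, h1]
    have hPltQ : 27 * α ^ 2 * β ^ 3 - 54 * α ^ 2 * β ^ 2 + 27 * α * β ^ 2 - 18 * α * β
          + 16 * α ^ 2 < 2 * (4 * α - 3 * β) * r := by
      rcases le_or_gt 0 (27 * α ^ 2 * β ^ 3 - 54 * α ^ 2 * β ^ 2 + 27 * α * β ^ 2
          - 18 * α * β + 16 * α ^ 2) with hP | hP
      · exact (pow_lt_pow_iff_left₀ hP hQpos.le two_ne_zero).mp hQP2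
      · linarith
    have hmul : rho α β 1 * (27 * α ^ 2 * β ^ 2)
        < rho α β (s0m α β) * (27 * α ^ 2 * β ^ 2) := by
      have h1 : 0 < α * (2 * (4 * α - 3 * β) * r - (27 * α ^ 2 * β ^ 3
          - 54 * α ^ 2 * β ^ 2 + 27 * α * β ^ 2 - 18 * α * β + 16 * α ^ 2)) :=
        mul_pos ha0 (by linarith)
      nlinarith [key, heq, h1]
    exact lt_of_mul_lt_mul_right hmul h27.le
end

section
/- Let 2/3 < β ≤ 1 and 3β/4 < α < 1/(4−3β), with s₀∓ = (2α∓√(4α²−3αβ))/(3αβ) and r* = min{ρ(s₀₋), ρ(1)}. Then r* > ρ(s₀₊) > 0, and for every r ∈ [ρ(s₀₊), r*] there exists a unique s₊(r) ∈ [s₀₊,1] with ρ(s₊(r)) = r and a unique s₋(r) ∈ (0,s₀₋] with ρ(s₋(r)) = r. -/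
open MeasureTheory Set

/-- `ρ(s₀₊) < r* ` with `ρ(s₀₊) > 0`, and for every
`r ∈ [ρ(s₀₊), r*]` there are unique `s₊(r) ∈ [s₀₊, 1]` and `s₋(r) ∈ (0, s₀₋]`
with `ρ(s₊(r)) = ρ(s₋(r)) = r`. -/
theorem splus_sminus_exist_unique
    (α β : ℝ) (hb1 : 2 / 3 < β) (hb2 : β ≤ 1)
    (hA1 : 3 * β / 4 < α) (hA2 : α < 1 / (4 - 3 * β)) :
    rho α β (s0p α β) < rstar α β ∧ 0 < rho α β (s0p α β) ∧
    ∀ r : ℝ, rho α β (s0p α β) ≤ r → r ≤ rstar α β →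
      (∃! s : ℝ, s ∈ Set.Icc (s0p α β) 1 ∧ rho α β s = r) ∧
      (∃! s : ℝ, s ∈ Set.Ioc 0 (s0m α β) ∧ rho α β s = r) := by
  have hβ0 : (0:ℝ) < β := by linarith
  have hα0 : (0:ℝ) < α := by linarith
  have h43 : (0:ℝ) < 4 - 3 * β := by linarith
  have hA2' : α * (4 - 3 * β) < 1 := by
    have := (lt_div_iff₀ h43).1 hA2; linarith
  have hαβ : α < β := by
    have h1 : 1 / (4 - 3 * β) ≤ β := by
      rw [div_le_iff₀ h43]; nlinarith
    linarith
  have hdisc : 0 < 4 * α ^ 2 - 3 * α * β := by nlinarith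
  set D := Real.sqrt (4 * α ^ 2 - 3 * α * β) with hDdef
  have hD2 : D ^ 2 = 4 * α ^ 2 - 3 * α * β := Real.sq_sqrt hdisc.le
  have hDpos : 0 < D := Real.sqrt_pos.2 hdisc
  have hden : 0 < 3 * α * β := by positivity
  have hm : s0m α β = (2 * α - D) / (3 * α * β) := rfl
  have hp : s0p α β = (2 * α + D) / (3 * α * β) := rfl
  have hD2α : D < 2 * α := by nlinarith
  have h2α : 2 * α < 3 * α * β := by nlinarith
  have hDlt : D < 3 * α * β - 2 * α := by nlinarith
  have hs0m_pos : 0 < s0m α β := by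
    rw [hm]; exact div_pos (by linarith) hden
  have hs0mp : s0m α β < s0p α β := by
    rw [hm, hp]; exact (div_lt_div_iff_of_pos_right hden).2 (by linarith)
  have hs0p_pos : 0 < s0p α β := lt_trans hs0m_pos hs0mp
  have hs0p_lt1 : s0p α β < 1 := by
    rw [hp, div_lt_one hden]; linarith
  have hs0m_lt1 : s0m α β < 1 := lt_trans hs0mp hs0p_lt1
  have e1 : 3 * β * (s0m α β + s0p α β) = 4 := by
    rw [hm, hp]; field_simp; ring
  have e2 : 3 * α * β * (s0m α β * s0p α β) = 1 := by
    rw [hm, hp]; field_simp; nlinarith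
  have hsig : ∀ s : ℝ, sig α β s = 3 * α * β * (s - s0m α β) * (s - s0p α β) := by
    intro s
    simp only [sig]
    linear_combination (α * s) * e1 - e2
  have hderiv : ∀ s : ℝ, HasDerivAt (rho α β) (sig α β s) s := by
    intro s
    have h : HasDerivAt (fun s : ℝ => α * β * s ^ 3 - 2 * α * s ^ 2 + s)
        (α * β * (↑3 * s ^ 2) - 2 * α * (↑2 * s ^ 1) + 1) s :=
      (((hasDerivAt_pow 3 s).const_mul (α * β)).sub
        ((hasDerivAt_pow 2 s).const_mul (2 * α))).add (hasDerivAt_id s)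
    have he : (α * β * (↑3 * s ^ 2) - 2 * α * (↑2 * s ^ 1) + 1) = sig α β s := by
      simp only [sig]; push_cast; ring
    rw [he] at h
    exact h
  have hcont : Continuous (rho α β) := by
    have : rho α β = fun s : ℝ => α * β * s ^ 3 - 2 * α * s ^ 2 + s := rfl
    rw [this]
    exact ((continuous_const.mul (continuous_pow 3)).sub (continuous_const.mul (continuous_pow 2))).add continuous_id
  have hdr : ∀ s : ℝ, deriv (rho α β) s = sig α β s := fun s => (hderiv s).deriv
  -- monotonicity
  have mono_p : StrictMonoOn (rho α β) (Set.Icc (s0p α β) 1) := by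
    apply strictMonoOn_of_deriv_pos (convex_Icc _ _) hcont.continuousOn
    intro x hx
    rw [interior_Icc] at hx
    rw [hdr, hsig]
    have h1 : 0 < x - s0m α β := by linarith [hx.1]
    have h2 : 0 < x - s0p α β := by linarith [hx.1]
    positivity
  have mono_m : StrictMonoOn (rho α β) (Set.Icc 0 (s0m α β)) := by
    apply strictMonoOn_of_deriv_pos (convex_Icc _ _) hcont.continuousOn
    intro x hx
    rw [interior_Icc] at hx
    rw [hdr, hsig]
    have h1 : x - s0m α β < 0 := by linarith [hx.2]
    have h2 : x - s0p α β < 0 := by linarith [hx.2]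
    exact mul_pos_of_neg_of_neg (mul_neg_of_pos_of_neg hden h1) h2
  have anti : StrictAntiOn (rho α β) (Set.Icc (s0m α β) (s0p α β)) := by
    apply strictAntiOn_of_deriv_neg (convex_Icc _ _) hcont.continuousOn
    intro x hx
    rw [interior_Icc] at hx
    rw [hdr, hsig]
    have h1 : 0 < x - s0m α β := by linarith [hx.1]
    have h2 : x - s0p α β < 0 := by linarith [hx.2]
    exact mul_neg_of_pos_of_neg (mul_pos hden h1) h2
  have hlt_m : rho α β (s0p α β) < rho α β (s0m α β) :=
    anti ⟨le_refl _, hs0mp.le⟩ ⟨hs0mp.le, le_refl _⟩ hs0mp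
  have hlt_1 : rho α β (s0p α β) < rho α β 1 :=
    mono_p ⟨le_refl _, hs0p_lt1.le⟩ ⟨hs0p_lt1.le, le_refl _⟩ hs0p_lt1
  have hstar : rho α β (s0p α β) < rstar α β := lt_min hlt_m hlt_1
  have hpos : 0 < rho α β (s0p α β) := by
    have key : α * β * rho α β (s0p α β)
        = s0p α β * ((α * β * s0p α β - α) ^ 2 + α * (β - α)) := by
      simp only [rho]; ring
    have h1 : 0 < s0p α β * ((α * β * s0p α β - α) ^ 2 + α * (β - α)) := by
      have h2 : 0 < α * (β - α) := mul_pos hα0 (by linarith)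
      have h3 : 0 ≤ (α * β * s0p α β - α) ^ 2 := sq_nonneg _
      positivity
    have h4 : 0 < α * β := mul_pos hα0 hβ0
    have h5 : 0 < α * β * rho α β (s0p α β) := by rw [key]; exact h1
    exact lt_of_mul_lt_mul_left (by simpa using h5) h4.le
  have hrho0 : rho α β 0 = 0 := by simp [rho]
  refine ⟨hstar, hpos, fun r hr1 hr2 => ⟨?_, ?_⟩⟩
  · -- on [s0p, 1]
    have hsub : r ∈ Set.Icc (rho α β (s0p α β)) (rho α β 1) :=
      ⟨hr1, le_trans hr2 (min_le_right _ _)⟩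
    obtain ⟨s, hs, hval⟩ :=
      intermediate_value_Icc hs0p_lt1.le hcont.continuousOn hsub
    refine ⟨s, ⟨hs, hval⟩, ?_⟩
    rintro y ⟨hy, hyval⟩
    exact mono_p.injOn hy hs (by rw [hyval, hval])
  · -- on (0, s0m]
    have hr_le : r ≤ rho α β (s0m α β) := le_trans hr2 (min_le_left _ _)
    have hr_pos : 0 < r := lt_of_lt_of_le hpos hr1
    have hsub : r ∈ Set.Icc (rho α β 0) (rho α β (s0m α β)) := by
      rw [hrho0]; exact ⟨hr_pos.le, hr_le⟩
    obtain ⟨s, hs, hval⟩ :=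
      intermediate_value_Icc hs0m_pos.le hcont.continuousOn hsub
    have hs_pos : 0 < s := by
      rcases lt_or_eq_of_le hs.1 with h | h
      · exact h
      · exfalso; rw [← h, hrho0] at hval; linarith
    refine ⟨s, ⟨⟨hs_pos, hs.2⟩, hval⟩, ?_⟩
    rintro y ⟨hy, hyval⟩
    exact mono_m.injOn ⟨hy.1.le, hy.2⟩ hs (by rw [hyval, hval])
end

section
/- Let 2/3 < β ≤ 1 and 3β/4 < α < 1/(4−3β), with s₀∓ = (2α∓√(4α²−3αβ))/(3αβ), r* = min{ρ(s₀₋),ρ(1)}, s₁∓ = s∓(ρ(s₀₊)) and s₂∓ = s∓(r*). Then 0 < s₁₋ < s₂₋ ≤ s₀₋ < s₀₊ = s₁₊ < s₂₊ ≤ 1, and moreover s₂₋ = s₀₋ or s₂₊ = 1. -/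
open MeasureTheory Set

section AuxLemmas

lemma hasDerivAt_rho (α β x : ℝ) : HasDerivAt (rho α β) (sig α β x) x := by
  have h2 := (((hasDerivAt_pow 3 x).const_mul (α * β)).sub
      ((hasDerivAt_pow 2 x).const_mul (2 * α))).add (hasDerivAt_id x)
  have hr : rho α β = fun s : ℝ => α * β * s ^ 3 - 2 * α * s ^ 2 + s := rfl
  rw [hr]
  have h3 : HasDerivAt (fun s : ℝ => α * β * s ^ 3 - 2 * α * s ^ 2 + s)
      (α * β * (↑3 * x ^ (3 - 1)) - 2 * α * (↑2 * x ^ (2 - 1)) + 1) x := h2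
  convert h3 using 1
  unfold sig; norm_num; ring

lemma continuous_rho (α β : ℝ) : Continuous (rho α β) := by
  unfold rho; continuity

end AuxLemmas

set_option maxHeartbeats 1000000 in
/-- ordering of the special values `s₁∓ = s∓(ρ(s₀₊))` and
`s₂∓ = s∓(r*)`, and the alternative `s₂₋ = s₀₋` or `s₂₊ = 1`. -/
theorem special_values_ordering
    (α β : ℝ) (hb1 : 2 / 3 < β) (hb2 : β ≤ 1)
    (hA1 : 3 * β / 4 < α) (hA2 : α < 1 / (4 - 3 * β))
    (s1m s1p s2m s2p : ℝ)
    (hs1m : s1m ∈ Set.Ioc 0 (s0m α β) ∧ rho α β s1m = rho α β (s0p α β))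
    (hs1p : s1p ∈ Set.Icc (s0p α β) 1 ∧ rho α β s1p = rho α β (s0p α β))
    (hs2m : s2m ∈ Set.Ioc 0 (s0m α β) ∧ rho α β s2m = rstar α β)
    (hs2p : s2p ∈ Set.Icc (s0p α β) 1 ∧ rho α β s2p = rstar α β) :
    0 < s1m ∧ s1m < s2m ∧ s2m ≤ s0m α β ∧ s0m α β < s0p α β ∧
    s0p α β = s1p ∧ s1p < s2p ∧ s2p ≤ 1 ∧
    (s2m = s0m α β ∨ s2p = 1) := by
  have hβ0 : (0:ℝ) < β := by linarith
  have hα0 : (0:ℝ) < α := by nlinarith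
  have hab : (0:ℝ) < 3 * α * β := by positivity
  set d := Real.sqrt (4 * α ^ 2 - 3 * α * β) with hd_def
  have hD : (0:ℝ) < 4 * α ^ 2 - 3 * α * β := by nlinarith
  have hd2 : d ^ 2 = 4 * α ^ 2 - 3 * α * β := Real.sq_sqrt hD.le
  have hd0 : 0 < d := Real.sqrt_pos.mpr hD
  have h4b : (0:ℝ) < 4 - 3 * β := by linarith
  have hA2' : α * (4 - 3 * β) < 1 := by
    rw [lt_div_iff₀ h4b] at hA2; exact hA2
  have hdlt : d < 2 * α := by
    rw [hd_def, show (2:ℝ) * α = Real.sqrt ((2 * α) ^ 2) from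
      (Real.sqrt_sq (by positivity)).symm]
    exact Real.sqrt_lt_sqrt hD.le (by nlinarith)
  have h3b2 : (0:ℝ) < 3 * α * β - 2 * α := by nlinarith
  have hdlt2 : d < 3 * α * β - 2 * α := by
    rw [hd_def, show 3 * α * β - 2 * α = Real.sqrt ((3 * α * β - 2 * α) ^ 2) from
      (Real.sqrt_sq h3b2.le).symm]
    exact Real.sqrt_lt_sqrt hD.le (by nlinarith)
  have hs0m_eq : s0m α β = (2 * α - d) / (3 * α * β) := rfl
  have hs0p_eq : s0p α β = (2 * α + d) / (3 * α * β) := rfl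
  have hs0m_pos : 0 < s0m α β := by
    rw [hs0m_eq]; exact div_pos (by linarith) hab
  have hmlt : s0m α β < s0p α β := by
    rw [hs0m_eq, hs0p_eq]
    exact div_lt_div_of_pos_right (by linarith) hab
  have hsp1 : s0p α β < 1 := by
    rw [hs0p_eq, div_lt_one hab]; linarith
  -- factorization of sig
  have hfac : ∀ x : ℝ, sig α β x * (3 * α * β)
      = (3 * α * β * x - (2 * α - d)) * (3 * α * β * x - (2 * α + d)) := by
    intro x; unfold sig; linear_combination hd2
  have hderiv : ∀ x : ℝ, deriv (rho α β) x = sig α β x :=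
    fun x => (hasDerivAt_rho α β x).deriv
  -- monotonicity on [0, s0m]
  have hmono1 : StrictMonoOn (rho α β) (Set.Icc 0 (s0m α β)) := by
    apply strictMonoOn_of_deriv_pos (convex_Icc _ _) (continuous_rho α β).continuousOn
    intro x hx
    rw [interior_Icc] at hx
    rw [hderiv x]
    have hx1 : 3 * α * β * x - (2 * α - d) < 0 := by
      have := hx.2; rw [hs0m_eq, lt_div_iff₀ hab] at this; linarith
    have hx2 : 3 * α * β * x - (2 * α + d) < 0 := by linarith
    nlinarith [hfac x, mul_pos_of_neg_of_neg hx1 hx2, hab]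
  -- antitonicity on [s0m, s0p]
  have hanti : StrictAntiOn (rho α β) (Set.Icc (s0m α β) (s0p α β)) := by
    apply strictAntiOn_of_deriv_neg (convex_Icc _ _) (continuous_rho α β).continuousOn
    intro x hx
    rw [interior_Icc] at hx
    rw [hderiv x]
    have hx1 : 0 < 3 * α * β * x - (2 * α - d) := by
      have := hx.1; rw [hs0m_eq, div_lt_iff₀ hab] at this; linarith
    have hx2 : 3 * α * β * x - (2 * α + d) < 0 := by
      have := hx.2; rw [hs0p_eq, lt_div_iff₀ hab] at this; linarith
    nlinarith [hfac x, mul_neg_of_pos_of_neg hx1 hx2, hab]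
  -- monotonicity on [s0p, 1]
  have hmono2 : StrictMonoOn (rho α β) (Set.Icc (s0p α β) 1) := by
    apply strictMonoOn_of_deriv_pos (convex_Icc _ _) (continuous_rho α β).continuousOn
    intro x hx
    rw [interior_Icc] at hx
    rw [hderiv x]
    have hx2 : 0 < 3 * α * β * x - (2 * α + d) := by
      have := hx.1; rw [hs0p_eq, div_lt_iff₀ hab] at this; linarith
    have hx1 : 0 < 3 * α * β * x - (2 * α - d) := by linarith
    nlinarith [hfac x, mul_pos hx1 hx2, hab]
  -- memberships
  have hm1 : s1m ∈ Set.Icc 0 (s0m α β) := ⟨hs1m.1.1.le, hs1m.1.2⟩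
  have hm2 : s2m ∈ Set.Icc 0 (s0m α β) := ⟨hs2m.1.1.le, hs2m.1.2⟩
  have hmsm : s0m α β ∈ Set.Icc 0 (s0m α β) := ⟨hs0m_pos.le, le_refl _⟩
  have hmspA : s0p α β ∈ Set.Icc (s0m α β) (s0p α β) := ⟨hmlt.le, le_refl _⟩
  have hmsmA : s0m α β ∈ Set.Icc (s0m α β) (s0p α β) := ⟨le_refl _, hmlt.le⟩
  have hmsp : s0p α β ∈ Set.Icc (s0p α β) 1 := ⟨le_refl _, hsp1.le⟩
  have hm1' : s1p ∈ Set.Icc (s0p α β) 1 := hs1p.1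
  have hm2' : s2p ∈ Set.Icc (s0p α β) 1 := hs2p.1
  have hmone : (1:ℝ) ∈ Set.Icc (s0p α β) 1 := ⟨hsp1.le, le_refl _⟩
  -- rho(s0p) < rstar
  have hr1 : rho α β (s0p α β) < rho α β (s0m α β) := hanti hmsmA hmspA hmlt
  have hr2 : rho α β (s0p α β) < rho α β 1 := hmono2 hmsp hmone hsp1
  have hrstar : rho α β (s0p α β) < rstar α β := lt_min hr1 hr2
  -- s1p = s0p
  have hs1p_eq : s0p α β = s1p :=
    (hmono2.injOn hm1' hmsp hs1p.2).symm
  refine ⟨hs1m.1.1, ?_, hs2m.1.2, hmlt, hs1p_eq, ?_, hs2p.1.2, ?_⟩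
  · exact (hmono1.lt_iff_lt hm1 hm2).mp (by rw [hs1m.2, hs2m.2]; exact hrstar)
  · exact (hmono2.lt_iff_lt hm1' hm2').mp (by rw [hs1p.2, hs2p.2]; exact hrstar)
  · rcases le_or_gt (rho α β (s0m α β)) (rho α β 1) with h | h
    · left
      have : rho α β s2m = rho α β (s0m α β) := by
        rw [hs2m.2]; unfold rstar; exact min_eq_left h
      exact hmono1.injOn hm2 hmsm this
    · right
      have : rho α β s2p = rho α β 1 := by
        rw [hs2p.2]; unfold rstar; exact min_eq_right h.le
      exact hmono2.injOn hm2' hmone this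
end
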